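/- arXiv:1304.1198 — 10 statements merged into one kernel-verified Lean document; each statement's English description precedes it below -/
import Mathlib

section
/- Let Q be a subset of a Euclidean space E that is prox-regular at x̄ ∈ Q, and suppose the metric projection P_Q is C^k-smooth (k ≥ 1) on a neighborhood of x̄. Then the derivative DP_Q has constant rank on a neighborhood of x̄, and consequently Q is a C^k manifold around x̄. -/
/-!
Near `x₀` the projection `P` fixes `Q` and, by uniqueness of nearest points, is constant on each
segment `[P x, x]`; hence `P ∘ P = P` and `DP(x) (x - P x) = 0`. The chain rule makes `DP(y)`
idempotent for `y ∈ Q`, so its rank equals its trace, which is continuous; with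
`range DP(x) ⊆ range DP(P x)` and lower semicontinuity of the rank this gives constant rank.
With `T = DP(x₀)`, the map `φ x = T (x - x₀) + (x - P x)` has derivative `1` at `x₀`, and
`φ x ∈ range T` exactly when `x - P x ∈ range T`, which by `DP(x) (x - P x) = 0` and injectivity
of `DP(x)` on `range T` happens exactly when `x ∈ Q`; so `φ` straightens `Q` onto `range T`.
-/

open Filter Metric Topology

variable {E : Type*} [NormedAddCommGroup E] [InnerProductSpace ℝ E] [FiniteDimensional ℝ E]

/-- The metric projection of `x` onto `Q`: the set of nearest points of `Q`. -/
def projSet (Q : Set E) (x : E) : Set E := {y | y ∈ Q ∧ dist x y = Metric.infDist x Q}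

/-- `Q` is prox-regular at `x₀`: `x₀ ∈ Q`, `Q` is locally closed around `x₀`, and the
metric projection onto `Q` is single-valued on a neighborhood of `x₀`. -/
def ProxRegularAt (Q : Set E) (x₀ : E) : Prop :=
  x₀ ∈ Q ∧ ∃ ε > (0:ℝ), IsClosed (Q ∩ Metric.closedBall x₀ ε) ∧
    ∀ x ∈ Metric.ball x₀ ε, ∃! y, y ∈ projSet Q x

/-- The proximal normal cone: nonnegative multiples of vectors `v` with `x₀ ∈ P_Q (x₀ + v)`. -/
def proxNormalCone (Q : Set E) (x₀ : E) : Set E :=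
  {w | ∃ t : ℝ, ∃ v : E, 0 ≤ t ∧ x₀ ∈ projSet Q (x₀ + v) ∧ w = t • v}

/-- `P` has directional derivative `L` at `x` in direction `v`. -/
def HasDirDeriv (P : E → E) (x v L : E) : Prop :=
  Filter.Tendsto (fun t : ℝ => t⁻¹ • (P (x + t • v) - P x)) (𝓝[>] (0:ℝ)) (𝓝 L)

/-- `M` is a `C^k` manifold around `x`: near `x`, a `C^k` local diffeomorphism of the ambient
space carries `M` onto a linear subspace. -/
def IsCkManifoldAround (k : ℕ∞) (M : Set E) (x : E) : Prop :=
  ∃ U : Set E, IsOpen U ∧ x ∈ U ∧ ∃ (φ ψ : E → E) (F : Submodule ℝ E),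
    ContDiffOn ℝ k φ U ∧ ContDiffOn ℝ k ψ (φ '' U) ∧
    (∀ y ∈ U, ψ (φ y) = y) ∧ φ '' (M ∩ U) = (F : Set E) ∩ φ '' U

open Set

section MetricProjection

variable {V : Type*} [NormedAddCommGroup V] {Q : Set V}

lemma eq_of_mem_projSet_of_mem {x y : V} (hx : x ∈ Q) (hy : y ∈ projSet Q x) : y = x :=
  (dist_eq_zero.mp (hy.2.trans (infDist_zero_of_mem hx))).symm

variable [NormedSpace ℝ V]

lemma mem_projSet_of_mem_segment {x y w : V} (hy : y ∈ projSet Q x) (hw : w ∈ segment ℝ y x) :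
    y ∈ projSet Q w := by
  refine ⟨hy.1, le_antisymm ?_ (infDist_le_dist_of_mem hy.1)⟩
  have hsplit := dist_add_dist_of_mem_segment hw
  have hlip := infDist_le_infDist_add_dist (s := Q) (x := x) (y := w)
  rw [dist_comm y w, dist_comm y x] at hsplit
  rw [dist_comm x w] at hlip
  linarith [hy.2]

lemma eqOn_segment_of_existsUnique_projSet {P : V → V} {x : V}
    (huniq : ∀ w ∈ segment ℝ (P x) x, ∃! y, y ∈ projSet Q w)
    (hP : ∀ w ∈ segment ℝ (P x) x, P w ∈ projSet Q w) :
    ∀ w ∈ segment ℝ (P x) x, P w = P x := fun w hw =>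
  (huniq w hw).unique (hP w hw)
    (mem_projSet_of_mem_segment (hP x (right_mem_segment ℝ _ _)) hw)

end MetricProjection

section LinearAlgebra

variable {V : Type*} [NormedAddCommGroup V] [NormedSpace ℝ V]

lemma eq_zero_of_norm_sub_lt_one {T A : V →L[ℝ] V} (hA : ‖A - T‖ < 1) {v : V} (hTv : T v = v)
    (hAv : A v = 0) : v = 0 := by
  by_contra hv
  have hpos : 0 < ‖v‖ := norm_pos_iff.mpr hv
  have : ‖v‖ ≤ ‖A - T‖ * ‖v‖ := by
    calc ‖v‖ = ‖(A - T) v‖ := by rw [sub_apply, hAv, hTv, zero_sub, norm_neg]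
      _ ≤ ‖A - T‖ * ‖v‖ := (A - T).le_opNorm v
  nlinarith

variable [FiniteDimensional ℝ V]

lemma finrank_range_le_of_norm_sub_lt_one {T A : V →L[ℝ] V} (hT : IsIdempotentElem T)
    (hA : ‖A - T‖ < 1) :
    Module.finrank ℝ (LinearMap.range (T : V →ₗ[ℝ] V)) ≤
      Module.finrank ℝ (LinearMap.range (A : V →ₗ[ℝ] V)) := by
  set F := LinearMap.range (T : V →ₗ[ℝ] V)
  have hinj : Function.Injective ((A : V →ₗ[ℝ] V) ∘ₗ F.subtype) := by
    rw [← LinearMap.ker_eq_bot, LinearMap.ker_eq_bot']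
    rintro ⟨_, u, rfl⟩ hu
    exact Subtype.ext <| eq_zero_of_norm_sub_lt_one hA (congrArg (· u) hT) hu
  rw [← LinearMap.finrank_range_of_inj hinj]
  exact Submodule.finrank_mono (LinearMap.range_comp_le_range _ _)

lemma finrank_range_eq_trace {T : V →L[ℝ] V} (hT : IsIdempotentElem T) :
    (Module.finrank ℝ (LinearMap.range (T : V →ₗ[ℝ] V)) : ℝ) =
      LinearMap.trace ℝ V (T : V →ₗ[ℝ] V) :=
  (LinearMap.IsIdempotentElem.isProj_range _
    (hT.map ContinuousLinearMap.toLinearMapRingHom)).trace.symm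

end LinearAlgebra

section TraceRank

variable {X V : Type*} [TopologicalSpace X] [NormedAddCommGroup V] [NormedSpace ℝ V]
  [FiniteDimensional ℝ V]

lemma eventually_finrank_range_eq_of_isIdempotentElem {B : X → V →L[ℝ] V} {x : X}
    (hB : ContinuousAt B x) (hidem : ∀ᶠ y in 𝓝 x, IsIdempotentElem (B y)) :
    ∀ᶠ y in 𝓝 x, Module.finrank ℝ (LinearMap.range (B y : V →ₗ[ℝ] V)) =
      Module.finrank ℝ (LinearMap.range (B x : V →ₗ[ℝ] V)) := by
  set r : X → ℕ := fun y => Module.finrank ℝ (LinearMap.range (B y : V →ₗ[ℝ] V))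
  have htrace : ContinuousAt (fun y => LinearMap.trace ℝ V (B y : V →ₗ[ℝ] V)) x :=
    (LinearMap.continuous_of_finiteDimensional
      ((LinearMap.trace ℝ V).comp (ContinuousLinearMap.coeLM ℝ))).continuousAt.comp hB
  have hr : ContinuousAt ((↑) ∘ r : X → ℝ) x :=
    htrace.congr (hidem.mono fun y hy => (finrank_range_eq_trace hy).symm)
  rw [← Nat.isClosedEmbedding_coe_real.isInducing.continuousAt_iff, ContinuousAt,
    nhds_discrete ℕ, tendsto_pure] at hr
  exact hr

end TraceRank

section Differentiation

variable {V W : Type*} [NormedAddCommGroup V] [NormedSpace ℝ V] [NormedAddCommGroup W]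
  [NormedSpace ℝ W]

lemma HasFDerivAt.apply_sub_eq_zero_of_eqOn_segment {f : V → W} {f' : V →L[ℝ] W} {x a : V}
    (hf : HasFDerivAt f f' x) (hconst : ∀ w ∈ segment ℝ a x, f w = f x) : f' (x - a) = 0 := by
  set g : ℝ → W := fun t => f (x + t • (a - x))
  have hline : HasDerivAt (fun t : ℝ => x + t • (a - x)) (a - x) 0 := by
    simpa using ((hasDerivAt_id (0 : ℝ)).smul_const (a - x)).const_add x
  have hderiv : HasDerivWithinAt g (f' (a - x)) (Icc 0 1) 0 :=
    (hf.comp_hasDerivAt_of_eq 0 hline (by simp)).hasDerivWithinAt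
  have hg : EqOn g (fun _ => f x) (Icc 0 1) := fun t ht => by
    refine hconst _ ?_
    rw [segment_symm, segment_eq_image']
    exact ⟨t, ht, rfl⟩
  have hzero : HasDerivWithinAt g 0 (Icc 0 1) 0 :=
    (hasDerivWithinAt_const _ _ (f x)).congr hg (hg ⟨le_rfl, zero_le_one⟩)
  have h := (uniqueDiffOn_Icc_zero_one 0 ⟨le_rfl, zero_le_one⟩).eq_deriv _ hderiv hzero
  rw [← neg_sub, map_neg, h, neg_zero]

lemma HasFDerivAt.comp_eq_of_comp_eventuallyEq {P : V → V} {A B : V →L[ℝ] V} {x : V}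
    (hA : HasFDerivAt P A x) (hB : HasFDerivAt P B (P x)) (hPP : P ∘ P =ᶠ[𝓝 x] P) :
    B ∘L A = A :=
  (hB.comp x hA).unique (hA.congr_of_eventuallyEq hPP)

end Differentiation

section Retraction

variable {V : Type*} [NormedAddCommGroup V] [NormedSpace ℝ V] {P : V → V} {x₀ : V}

lemma eventually_fderiv_comp_fderiv_eq (hd : ∀ᶠ x in 𝓝 x₀, DifferentiableAt ℝ P x)
    (hPP : P ∘ P =ᶠ[𝓝 x₀] P) (hx₀ : P x₀ = x₀) :
    ∀ᶠ x in 𝓝 x₀, fderiv ℝ P (P x) ∘L fderiv ℝ P x = fderiv ℝ P x := by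
  have hPt : Tendsto P (𝓝 x₀) (𝓝 x₀) := by
    simpa only [ContinuousAt, hx₀] using hd.self_of_nhds.continuousAt
  filter_upwards [hd, hPt.eventually hd, hPP.eventually_nhds] with x hx hPx hPPx
  exact hx.hasFDerivAt.comp_eq_of_comp_eventuallyEq hPx.hasFDerivAt hPPx

lemma isIdempotentElem_fderiv_of_retraction (hd : ∀ᶠ x in 𝓝 x₀, DifferentiableAt ℝ P x)
    (hPP : P ∘ P =ᶠ[𝓝 x₀] P) (hx₀ : P x₀ = x₀) : IsIdempotentElem (fderiv ℝ P x₀) := by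
  have h := (eventually_fderiv_comp_fderiv_eq hd hPP hx₀).self_of_nhds
  rwa [hx₀] at h

variable [FiniteDimensional ℝ V]

theorem eventually_rank_fderiv_eq_of_retraction (hd : ∀ᶠ x in 𝓝 x₀, DifferentiableAt ℝ P x)
    (hc : ContinuousAt (fderiv ℝ P) x₀) (hPP : P ∘ P =ᶠ[𝓝 x₀] P) (hx₀ : P x₀ = x₀) :
    ∀ᶠ x in 𝓝 x₀, LinearMap.rank (fderiv ℝ P x : V →ₗ[ℝ] V) =
      LinearMap.rank (fderiv ℝ P x₀ : V →ₗ[ℝ] V) := by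
  have hPc : ContinuousAt P x₀ := hd.self_of_nhds.continuousAt
  have hPt : Tendsto P (𝓝 x₀) (𝓝 x₀) := by simpa only [ContinuousAt, hx₀] using hPc
  have hchain := eventually_fderiv_comp_fderiv_eq hd hPP hx₀
  have hidem : ∀ᶠ x in 𝓝 x₀, IsIdempotentElem (fderiv ℝ P (P x)) := by
    filter_upwards [hPt.eventually hchain, hPP] with x hx hPx
    rwa [show P (P x) = P x from hPx] at hx
  have hrankP : ∀ᶠ x in 𝓝 x₀,
      Module.finrank ℝ (LinearMap.range (fderiv ℝ P (P x) : V →ₗ[ℝ] V)) =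
        Module.finrank ℝ (LinearMap.range (fderiv ℝ P x₀ : V →ₗ[ℝ] V)) := by
    have h := eventually_finrank_range_eq_of_isIdempotentElem (hc.comp_of_eq hPc hx₀) hidem
    rwa [Function.comp_apply, hx₀] at h
  have hclose : ∀ᶠ x in 𝓝 x₀, ‖fderiv ℝ P x - fderiv ℝ P x₀‖ < 1 := by
    simpa only [mem_ball_iff_norm] using hc.eventually_mem (ball_mem_nhds _ one_pos)
  filter_upwards [hrankP, hclose, hchain] with x hrank hnear hcomp
  have hle : LinearMap.range (fderiv ℝ P x : V →ₗ[ℝ] V) ≤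
      LinearMap.range (fderiv ℝ P (P x) : V →ₗ[ℝ] V) := by
    rw [← hcomp, ContinuousLinearMap.toLinearMap_comp]
    exact LinearMap.range_comp_le_range _ _
  have hfinrank : Module.finrank ℝ (LinearMap.range (fderiv ℝ P x : V →ₗ[ℝ] V)) =
      Module.finrank ℝ (LinearMap.range (fderiv ℝ P x₀ : V →ₗ[ℝ] V)) :=
    le_antisymm (hrank ▸ Submodule.finrank_mono hle)
      (finrank_range_le_of_norm_sub_lt_one
        (isIdempotentElem_fderiv_of_retraction hd hPP hx₀) hnear)
  rw [LinearMap.rank, LinearMap.rank, ← Submodule.finrank_eq_rank, ← Submodule.finrank_eq_rank,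
    hfinrank]

end Retraction

section ProjectionKernel

variable {V : Type*} [NormedAddCommGroup V] [NormedSpace ℝ V] {P : V → V} {x₀ : V}

lemma eventually_segment_subset (hPc : ContinuousAt P x₀) (hx₀ : P x₀ = x₀) {p : V → Prop}
    (hp : ∀ᶠ x in 𝓝 x₀, p x) : ∀ᶠ x in 𝓝 x₀, ∀ w ∈ segment ℝ (P x) x, p w := by
  obtain ⟨r, hr, hball⟩ := Metric.eventually_nhds_iff_ball.mp hp
  have hPball : P ⁻¹' ball x₀ r ∈ 𝓝 x₀ :=
    hPc.preimage_mem_nhds (by rw [hx₀]; exact ball_mem_nhds x₀ hr)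
  filter_upwards [ball_mem_nhds x₀ hr, hPball] with x hx hPx w hw
  exact hball w ((convex_ball x₀ r).segment_subset hPx hx hw)

lemma eventually_fderiv_apply_sub_eq_zero {Q : Set V}
    (huniq : ∀ᶠ x in 𝓝 x₀, ∃! y, y ∈ projSet Q x) (hP : ∀ᶠ x in 𝓝 x₀, P x ∈ projSet Q x)
    (hd : ∀ᶠ x in 𝓝 x₀, DifferentiableAt ℝ P x) (hx₀ : P x₀ = x₀) :
    ∀ᶠ x in 𝓝 x₀, fderiv ℝ P x (x - P x) = 0 := by
  filter_upwards [eventually_segment_subset hd.self_of_nhds.continuousAt hx₀ (huniq.and hP), hd]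
    with x hseg hx
  exact hx.hasFDerivAt.apply_sub_eq_zero_of_eqOn_segment <|
    eqOn_segment_of_existsUnique_projSet (fun w hw => (hseg w hw).1) (fun w hw => (hseg w hw).2)

end ProjectionKernel

section LocalInverse

variable {V W : Type*} [NormedAddCommGroup V] [NormedSpace ℝ V] [CompleteSpace V]
  [NormedAddCommGroup W] [NormedSpace ℝ W] {n : WithTop ℕ∞} {f : V → W} {U : Set V} {x : V}

theorem ContDiffOn.exists_isOpen_contDiffOn_leftInverse (hf : ContDiffOn ℝ n f U)
    (hU : IsOpen U) (hn : 1 ≤ n) (hx : x ∈ U) {f' : V ≃L[ℝ] W}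
    (hf' : HasFDerivAt f (f' : V →L[ℝ] W) x) :
    ∃ O, IsOpen O ∧ x ∈ O ∧ O ⊆ U ∧
      ∃ g : W → V, ContDiffOn ℝ n g (f '' O) ∧ ∀ y ∈ O, g (f y) = y := by
  have hn₀ : n ≠ 0 := (zero_lt_one.trans_le hn).ne'
  have hfx : ContDiffAt ℝ n f x := hf.contDiffAt (hU.mem_nhds hx)
  set H := hfx.toOpenPartialHomeomorph f hf' hn₀
  have hO : IsOpen (H.source ∩ U ∩ fderiv ℝ f ⁻¹' range ((↑) : (V ≃L[ℝ] W) → V →L[ℝ] W)) :=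
    ((hf.continuousOn_fderiv_of_isOpen hU hn).mono inter_subset_right).isOpen_inter_preimage
      (H.open_source.inter hU) ContinuousLinearEquiv.isOpen
  refine ⟨_, hO, ⟨⟨hfx.mem_toOpenPartialHomeomorph_source hf' hn₀, hx⟩,
    f', hf'.fderiv.symm⟩, fun y hy => hy.1.2, H.symm, ?_, fun y hy => H.left_inv hy.1.1⟩
  rintro _ ⟨y, ⟨⟨hyH, hyU⟩, e, he⟩, rfl⟩
  refine (H.contDiffAt_symm (f₀' := e) (H.map_source hyH) ?_ ?_).contDiffWithinAt
  · rw [H.left_inv hyH, he]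
    exact ((hf.differentiableOn hn₀ y hyU).differentiableAt (hU.mem_nhds hyU)).hasFDerivAt
  · rw [H.left_inv hyH]
    exact hf.contDiffAt (hU.mem_nhds hyU)

end LocalInverse

lemma mem_iff_sub_mem_range_of_norm_sub_lt_one {V : Type*} [NormedAddCommGroup V]
    [NormedSpace ℝ V] {Q : Set V} {P : V → V} {T A : V →L[ℝ] V} (hT : IsIdempotentElem T)
    (hA : ‖A - T‖ < 1) {z : V} (hPz : P z ∈ Q) (hfix : z ∈ Q → P z = z)
    (hker : A (z - P z) = 0) : z ∈ Q ↔ z - P z ∈ LinearMap.range (T : V →ₗ[ℝ] V) := by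
  constructor
  · intro hz
    rw [hfix hz, sub_self]
    exact zero_mem _
  · rintro ⟨u, hu⟩
    have hTfix : T (z - P z) = z - P z := by
      rw [← hu]
      exact congrArg (· u) hT
    rw [sub_eq_zero.mp (eq_zero_of_norm_sub_lt_one hA hTfix hker)]
    exact hPz

theorem isCkManifoldAround_of_mem_iff {G : Type*} [NormedAddCommGroup G] [InnerProductSpace ℝ G]
    [CompleteSpace G] {k : ℕ∞} (hk : 1 ≤ k) {M : Set G} {x : G} {φ : G → G} {U : Set G}
    (hU : IsOpen U) (hx : x ∈ U) (hφ : ContDiffOn ℝ k φ U) {φ' : G ≃L[ℝ] G}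
    (hφ' : HasFDerivAt φ (φ' : G →L[ℝ] G) x) {F : Submodule ℝ G}
    (hM : ∀ y ∈ U, y ∈ M ↔ φ y ∈ F) : IsCkManifoldAround k M x := by
  obtain ⟨O, hO, hxO, hOU, ψ, hψ, hψφ⟩ :=
    hφ.exists_isOpen_contDiffOn_leftInverse hU (by exact_mod_cast hk) hx hφ'
  refine ⟨O, hO, hxO, φ, ψ, F, hφ.mono hOU, hψ, hψφ, ?_⟩
  ext w
  constructor
  · rintro ⟨y, ⟨hyM, hyO⟩, rfl⟩
    exact ⟨(hM y (hOU hyO)).1 hyM, y, hyO, rfl⟩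
  · rintro ⟨hwF, y, hyO, rfl⟩
    exact ⟨y, ⟨(hM y (hOU hyO)).2 hwF, hyO⟩, rfl⟩

theorem isCkManifoldAround_of_retraction {Q : Set E} {P : E → E} {U : Set E} {x₀ : E} {k : ℕ∞}
    (hU : IsOpen U) (hx₀U : x₀ ∈ U) (hPQ : ∀ x ∈ U, P x ∈ Q) (hfix : ∀ y ∈ U, y ∈ Q → P y = y)
    (hk : 1 ≤ k) (hsm : ContDiffOn ℝ k P U) (hx₀ : P x₀ = x₀) (hPP : P ∘ P =ᶠ[𝓝 x₀] P)
    (hker : ∀ᶠ x in 𝓝 x₀, fderiv ℝ P x (x - P x) = 0) : IsCkManifoldAround k Q x₀ := by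
  have hk' : (1 : WithTop ℕ∞) ≤ k := by exact_mod_cast hk
  have hd : ∀ᶠ x in 𝓝 x₀, DifferentiableAt ℝ P x :=
    (hsm.differentiableOn (zero_lt_one.trans_le hk').ne').eventually_differentiableAt
      (hU.mem_nhds hx₀U)
  set T := fderiv ℝ P x₀
  have hclose : ∀ᶠ x in 𝓝 x₀, ‖fderiv ℝ P x - T‖ < 1 := by
    simpa only [mem_ball_iff_norm] using
      ((hsm.continuousOn_fderiv_of_isOpen hU hk').continuousAt (hU.mem_nhds hx₀U)).eventually_mem
        (ball_mem_nhds _ one_pos)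
  -- On `Q`, `φ x = T (x - x₀)`; its derivative at `x₀` is `T + (1 - T) = 1`.
  set φ : E → E := fun x => T (x - x₀) + (x - P x)
  have hφ : ContDiffOn ℝ k φ U :=
    (T.contDiff.comp (contDiff_id.sub contDiff_const)).contDiffOn.add (contDiffOn_id.sub hsm)
  have hφ' : HasFDerivAt φ ((ContinuousLinearEquiv.refl ℝ E : E ≃L[ℝ] E) : E →L[ℝ] E) x₀ := by
    refine ((T.hasFDerivAt.comp x₀ ((hasFDerivAt_id x₀).sub_const x₀)).add
      ((hasFDerivAt_id x₀).sub hd.self_of_nhds.hasFDerivAt)).congr_fderiv ?_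
    ext v
    simp [T]
  obtain ⟨O, hO, hOopen, hx₀O⟩ :=
    _root_.eventually_nhds_iff.mp ((eventually_mem_nhds_iff.mpr (hU.mem_nhds hx₀U)).and
      (hker.and hclose))
  refine isCkManifoldAround_of_mem_iff hk (hOopen.inter hU) ⟨hx₀O, hx₀U⟩
    (hφ.mono inter_subset_right) hφ' (F := LinearMap.range (T : E →ₗ[ℝ] E)) fun z hz => ?_
  obtain ⟨-, hzker, hznear⟩ := hO z hz.1
  rw [mem_iff_sub_mem_range_of_norm_sub_lt_one (isIdempotentElem_fderiv_of_retraction hd hPP hx₀)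
    hznear (hPQ z hz.2) (hfix z hz.2) hzker]
  exact (Submodule.add_mem_iff_right _ (LinearMap.mem_range_self _ _)).symm

/-- If the projection onto a prox-regular set `Q` is `C^k` (`k ≥ 1`) near `x₀`, then its
derivative has constant rank near `x₀`, and consequently `Q` is a `C^k` manifold around `x₀`. -/
theorem manifold_of_smooth_proj {Q : Set E} {x₀ : E}
    (hQ : ProxRegularAt Q x₀) (P : E → E) (U : Set E)
    (hU : IsOpen U) (hxU : x₀ ∈ U) (hP : ∀ x ∈ U, P x ∈ projSet Q x)
    (k : ℕ∞) (hk : 1 ≤ k) (hsm : ContDiffOn ℝ k P U) :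
    (∃ V ∈ 𝓝 x₀, ∀ x ∈ V,
        LinearMap.rank ((fderiv ℝ P x : E →L[ℝ] E) : E →ₗ[ℝ] E) =
        LinearMap.rank ((fderiv ℝ P x₀ : E →L[ℝ] E) : E →ₗ[ℝ] E)) ∧
      IsCkManifoldAround k Q x₀ := by
  obtain ⟨hx₀Q, ε, hε, -, huniq⟩ := hQ
  have hk' : (1 : WithTop ℕ∞) ≤ k := by exact_mod_cast hk
  have hUx₀ : U ∈ 𝓝 x₀ := hU.mem_nhds hxU
  have hfix : ∀ y ∈ U, y ∈ Q → P y = y := fun y hy hyQ =>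
    eq_of_mem_projSet_of_mem hyQ (hP y hy)
  have hx₀ : P x₀ = x₀ := hfix x₀ hxU hx₀Q
  have hd : ∀ᶠ x in 𝓝 x₀, DifferentiableAt ℝ P x :=
    (hsm.differentiableOn (zero_lt_one.trans_le hk').ne').eventually_differentiableAt hUx₀
  have hPU : ∀ᶠ x in 𝓝 x₀, P x ∈ U :=
    hd.self_of_nhds.continuousAt.preimage_mem_nhds (by rwa [hx₀])
  have hPP : P ∘ P =ᶠ[𝓝 x₀] P := by
    filter_upwards [hUx₀, hPU] with x hx hPx using hfix (P x) hPx (hP x hx).1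
  have hker : ∀ᶠ x in 𝓝 x₀, fderiv ℝ P x (x - P x) = 0 :=
    eventually_fderiv_apply_sub_eq_zero (eventually_of_mem (ball_mem_nhds x₀ hε) huniq)
      (eventually_of_mem hUx₀ hP) hd hx₀
  refine ⟨?_, isCkManifoldAround_of_retraction hU hxU (fun x hx => (hP x hx).1) hfix hk hsm hx₀
    hPP hker⟩
  exact (eventually_rank_fderiv_eq_of_retraction hd
    ((hsm.continuousOn_fderiv_of_isOpen hU hk').continuousAt hUx₀) hPP hx₀).exists_mem
end

section
/- Let Q be a subset of a Euclidean space E that is prox-regular at x̄. Then the function h(x) := ½‖x‖² − ½ d_Q(x)² is continuously differentiable on a neighborhood of x̄, and its gradient satisfies ∇h(x) = P_Q(x) for all x near x̄. -/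
open Filter Metric Topology

variable {E : Type*} [NormedAddCommGroup E] [InnerProductSpace ℝ E] [FiniteDimensional ℝ E]

open scoped RealInnerProductSpace

/-- For a set `Q` prox-regular at `x₀`, the function `h(x) = ½‖x‖² − ½ d_Q(x)²` is `C¹` near
`x₀` and its gradient is the metric projection onto `Q`. -/
theorem gradient_of_half_normSq_sub_half_distSq {Q : Set E} {x₀ : E}
    (hQ : ProxRegularAt Q x₀) (P : E → E) (hP : ∀ᶠ x in 𝓝 x₀, P x ∈ projSet Q x) :
    ∃ U ∈ 𝓝 x₀,
      ContDiffOn ℝ 1 (fun x => (1/2) * ‖x‖^2 - (1/2) * (Metric.infDist x Q)^2) U ∧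
      ∀ x ∈ U, HasGradientAt (fun x => (1/2) * ‖x‖^2 - (1/2) * (Metric.infDist x Q)^2) (P x) x := by
  obtain ⟨hx₀Q, ε, hε, hclosed, huniq⟩ := hQ
  obtain ⟨δ₀, hδ₀, hPball⟩ := Metric.eventually_nhds_iff_ball.mp hP
  set δ := min δ₀ (ε/3) with hδdef
  have hδ : 0 < δ := lt_min hδ₀ (by linarith)
  set U := Metric.ball x₀ δ with hU
  have hUopen : IsOpen U := Metric.isOpen_ball
  have hPx : ∀ x ∈ U, P x ∈ projSet Q x := fun x hx =>
    hPball x (Metric.ball_subset_ball (min_le_left _ _) hx)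
  have hUsub : U ⊆ Metric.ball x₀ ε :=
    Metric.ball_subset_ball (le_trans (min_le_right _ _) (by linarith))
  have huniq' : ∀ x ∈ U, ∀ q, q ∈ projSet Q x → q = P x := fun x hx q hq =>
    (huniq x (hUsub hx)).unique hq (hPx x hx)
  have hPK : ∀ x ∈ U, P x ∈ Q ∩ Metric.closedBall x₀ ε := by
    intro x hx
    refine ⟨(hPx x hx).1, ?_⟩
    have h1 : dist x (P x) = infDist x Q := (hPx x hx).2
    have h2 : infDist x Q ≤ dist x x₀ := infDist_le_dist_of_mem hx₀Q
    have h3 : dist x x₀ < δ := mem_ball.mp hx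
    have h4 : δ ≤ ε/3 := min_le_right _ _
    have := dist_triangle (P x) x x₀
    rw [mem_closedBall]
    rw [dist_comm x (P x)] at h1
    linarith
  have hKcomp : IsCompact (Q ∩ Metric.closedBall x₀ ε) :=
    (isCompact_closedBall x₀ ε).of_isClosed_subset hclosed Set.inter_subset_right
  have hcont : ∀ x ∈ U, ContinuousAt P x := by
    intro x hx
    rw [ContinuousAt, tendsto_iff_seq_tendsto]
    intro u hu
    apply tendsto_of_subseq_tendsto
    intro ns hns
    have hv : Tendsto (fun n => u (ns n)) atTop (𝓝 x) := hu.comp hns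
    have hvU : ∀ᶠ n in atTop, u (ns n) ∈ U := hv (hUopen.mem_nhds hx)
    have hfreq : ∃ᶠ n in atTop, P (u (ns n)) ∈ Q ∩ Metric.closedBall x₀ ε :=
      (hvU.mono fun n hn => hPK _ hn).frequently
    obtain ⟨a, haK, φ, hφ, hφt⟩ := hKcomp.tendsto_subseq' hfreq
    refine ⟨φ, ?_⟩
    have hvφ : Tendsto (fun n => u (ns (φ n))) atTop (𝓝 x) := hv.comp hφ.tendsto_atTop
    have haP : a = P x := by
      apply huniq' x hx
      refine ⟨haK.1, ?_⟩
      have hd : Tendsto (fun n => dist (u (ns (φ n))) (P (u (ns (φ n))))) atTop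
          (𝓝 (dist x a)) := hvφ.dist hφt
      have hd2 : Tendsto (fun n => infDist (u (ns (φ n))) Q) atTop (𝓝 (infDist x Q)) :=
        (continuous_infDist_pt Q).continuousAt.tendsto.comp hvφ
      have heq : ∀ᶠ n in atTop, dist (u (ns (φ n))) (P (u (ns (φ n)))) =
          infDist (u (ns (φ n))) Q := by
        have : ∀ᶠ n in atTop, u (ns (φ n)) ∈ U := hvφ (hUopen.mem_nhds hx)
        exact this.mono fun n hn => (hPx _ hn).2
      exact tendsto_nhds_unique (hd.congr' heq) hd2
    rw [haP] at hφt
    exact hφt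
  set h : E → ℝ := fun x => (1/2) * ‖x‖^2 - (1/2) * (Metric.infDist x Q)^2 with hh
  have hid : ∀ z q, q ∈ projSet Q z → h z = ⟪z, q⟫ - (1/2) * ‖q‖^2 := by
    intro z q hq
    have : infDist z Q = ‖z - q‖ := by rw [← hq.2, dist_eq_norm]
    simp only [hh, this, norm_sub_sq_real]
    ring
  have hlow : ∀ z : E, ∀ y ∈ Q, ⟪z, y⟫ - (1/2) * ‖y‖^2 ≤ h z := by
    intro z y hy
    have h1 : infDist z Q ≤ ‖z - y‖ := by
      rw [← dist_eq_norm]; exact infDist_le_dist_of_mem hy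
    have h2 : (infDist z Q)^2 ≤ ‖z - y‖^2 := by
      apply sq_le_sq' _ h1
      have := infDist_nonneg (x := z) (s := Q)
      nlinarith [norm_nonneg (z - y)]
    have h3 : ‖z - y‖^2 = ‖z‖^2 - 2*⟪z,y⟫ + ‖y‖^2 := norm_sub_sq_real z y
    simp only [hh]
    nlinarith
  have hgrad : ∀ x ∈ U, HasGradientAt h (P x) x := by
    intro x hx
    rw [hasGradientAt_iff_isLittleO, Asymptotics.isLittleO_iff]
    intro c hc
    have h1 : ∀ᶠ z in 𝓝 x, z ∈ U := hUopen.mem_nhds hx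
    have h2 : ∀ᶠ z in 𝓝 x, ‖P z - P x‖ < c := by
      filter_upwards [(hcont x hx).preimage_mem_nhds (Metric.ball_mem_nhds (P x) hc)] with z hz
      rw [← dist_eq_norm]
      exact Metric.mem_ball.mp hz
    filter_upwards [h1, h2] with z hzU hPzc
    have e1 : h x = ⟪x, P x⟫ - (1/2) * ‖P x‖^2 := hid x (P x) (hPx x hx)
    have e2 : h z = ⟪z, P z⟫ - (1/2) * ‖P z‖^2 := hid z (P z) (hPx z hzU)
    have l1 : ⟪z, P x⟫ - (1/2) * ‖P x‖^2 ≤ h z := hlow z (P x) (hPx x hx).1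
    have l2 : ⟪x, P z⟫ - (1/2) * ‖P z‖^2 ≤ h x := hlow x (P z) (hPx z hzU).1
    have i1 : ⟪P x, z - x⟫ = ⟪z, P x⟫ - ⟪x, P x⟫ := by
      rw [inner_sub_right, real_inner_comm (P x) z, real_inner_comm (P x) x]
    have lb : 0 ≤ h z - h x - ⟪P x, z - x⟫ := by rw [i1, e1]; linarith
    have ub : h z - h x - ⟪P x, z - x⟫ ≤ ⟪z - x, P z - P x⟫ := by
      have : ⟪z - x, P z - P x⟫ = ⟪z, P z⟫ - ⟪x, P z⟫ - (⟪z, P x⟫ - ⟪x, P x⟫) := by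
        rw [inner_sub_left, inner_sub_right, inner_sub_right]; ring
      rw [this, i1, e2]; linarith
    have ub2 : ⟪z - x, P z - P x⟫ ≤ ‖z - x‖ * ‖P z - P x‖ := real_inner_le_norm _ _
    have : ‖z - x‖ * ‖P z - P x‖ ≤ c * ‖z - x‖ := by
      rw [mul_comm]
      exact mul_le_mul_of_nonneg_right hPzc.le (norm_nonneg _)
    rw [Real.norm_eq_abs, abs_of_nonneg lb]
    linarith
  have hC1 : ContDiffOn ℝ 1 h U := by
    have hfd : ∀ x ∈ U, fderiv ℝ h x = InnerProductSpace.toDual ℝ E (P x) := by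
      intro x hx
      exact ((hgrad x hx).hasFDerivAt).fderiv
    rw [show (1 : WithTop ℕ∞) = 0 + 1 from (zero_add 1).symm,
      contDiffOn_succ_iff_fderiv_of_isOpen hUopen]
    refine ⟨fun x hx => ((hgrad x hx).differentiableAt).differentiableWithinAt,
      by simp, ?_⟩
    rw [contDiffOn_zero]
    exact ContinuousOn.congr (((InnerProductSpace.toDual ℝ E).continuous.comp_continuousOn
      (fun x hx => (hcont x hx).continuousWithinAt))) hfd
  exact ⟨U, hUopen.mem_nhds (mem_ball_self hδ), hC1, hgrad⟩
end

section
/- Let x, y, u, v ∈ ℝⁿ. There exists an orthogonal matrix U ∈ O(n) with Diag(x) = Uᵀ Diag(u) U and Diag(y) = Uᵀ Diag(v) U if and only if there exists a permutation σ of {1,…,n} with x = σu and y = σv (where σ acts by permuting coordinates). -/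
open Matrix Finset

/-- From equal fiber cardinalities, get a permutation relating two functions. -/
lemma exists_perm_of_fiber_card {α : Type*} [DecidableEq α] {n : ℕ} (f g : Fin n → α)
    (h : ∀ p, Fintype.card {j // f j = p} = Fintype.card {i // g i = p}) :
    ∃ σ : Equiv.Perm (Fin n), f = g ∘ σ := by
  classical
  let e : ∀ p, {j // f j = p} ≃ {i // g i = p} := fun p => Fintype.equivOfCardEq (h p)
  refine ⟨Equiv.ofFiberEquiv e, funext fun j => ?_⟩
  exact (Equiv.ofFiberEquiv_map e j).symm

def PM {n : ℕ} (σ : Equiv.Perm (Fin n)) : Matrix (Fin n) (Fin n) ℝ :=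
  Matrix.of fun i j => if i = σ j then (1:ℝ) else 0

lemma PM_orth {n : ℕ} (σ : Equiv.Perm (Fin n)) : (PM σ)ᵀ * PM σ = 1 := by
  ext j k
  simp only [PM, Matrix.mul_apply, Matrix.transpose_apply, Matrix.one_apply, Matrix.of_apply]
  simp only [ite_mul, one_mul, zero_mul]
  rw [Finset.sum_ite_eq' (Finset.univ) (σ j)]
  simp [Equiv.apply_eq_iff_eq, eq_comm]

lemma PM_comm {n : ℕ} (σ : Equiv.Perm (Fin n)) (a : Fin n → ℝ) :
    PM σ * Matrix.diagonal (a ∘ σ) = Matrix.diagonal a * PM σ := by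
  ext i j
  simp only [PM, Matrix.mul_diagonal, Matrix.diagonal_mul, Matrix.of_apply, Function.comp]
  split_ifs with h
  · rw [h]; ring
  · ring

lemma PM_conj {n : ℕ} (σ : Equiv.Perm (Fin n)) (a : Fin n → ℝ) :
    Matrix.diagonal (a ∘ σ) = (PM σ)ᵀ * Matrix.diagonal a * PM σ := by
  calc Matrix.diagonal (a ∘ σ) = 1 * Matrix.diagonal (a ∘ σ) := (one_mul _).symm
    _ = ((PM σ)ᵀ * PM σ) * Matrix.diagonal (a ∘ σ) := by rw [PM_orth]
    _ = (PM σ)ᵀ * (PM σ * Matrix.diagonal (a ∘ σ)) := by simp [Matrix.mul_assoc]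
    _ = (PM σ)ᵀ * (Matrix.diagonal a * PM σ) := by rw [PM_comm]
    _ = (PM σ)ᵀ * Matrix.diagonal a * PM σ := by simp [Matrix.mul_assoc]

/-- Simultaneous conjugacy: two pairs of diagonal matrices are simultaneously orthogonally
conjugate iff the diagonal vectors match after a common permutation of coordinates. -/
theorem simultaneous_conjugacy (n : ℕ) (x y u v : Fin n → ℝ) :
    (∃ U : Matrix (Fin n) (Fin n) ℝ, Uᵀ * U = 1 ∧
        Matrix.diagonal x = Uᵀ * Matrix.diagonal u * U ∧
        Matrix.diagonal y = Uᵀ * Matrix.diagonal v * U) ↔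
      (∃ σ : Equiv.Perm (Fin n), x = u ∘ σ ∧ y = v ∘ σ) := by
  classical
  constructor
  · rintro ⟨U, hU, hx, hy⟩
    have hU' : U * Uᵀ = 1 := mul_eq_one_comm.mp hU
    -- commutation relations
    have hcx : U * Matrix.diagonal x = Matrix.diagonal u * U := by
      rw [hx]
      calc U * (Uᵀ * Matrix.diagonal u * U)
          = (U * Uᵀ) * (Matrix.diagonal u * U) := by simp only [Matrix.mul_assoc]
        _ = Matrix.diagonal u * U := by rw [hU', one_mul]
    have hcy : U * Matrix.diagonal y = Matrix.diagonal v * U := by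
      rw [hy]
      calc U * (Uᵀ * Matrix.diagonal v * U)
          = (U * Uᵀ) * (Matrix.diagonal v * U) := by simp only [Matrix.mul_assoc]
        _ = Matrix.diagonal v * U := by rw [hU', one_mul]
    -- entrywise consequence
    have key : ∀ i j, U i j ≠ 0 → u i = x j ∧ v i = y j := by
      intro i j hij
      have h1 : U i j * x j = u i * U i j := by
        have := congrFun (congrFun hcx i) j
        simpa [Matrix.mul_diagonal, Matrix.diagonal_mul] using this
      have h2 : U i j * y j = v i * U i j := by
        have := congrFun (congrFun hcy i) j
        simpa [Matrix.mul_diagonal, Matrix.diagonal_mul] using this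
      constructor
      · have := h1
        field_simp at this
        rcases mul_eq_mul_right_iff.mp (by linarith [this] : x j * U i j = u i * U i j) with h | h
        · exact h.symm
        · exact absurd h hij
      · rcases mul_eq_mul_right_iff.mp (by linarith [h2] : y j * U i j = v i * U i j) with h | h
        · exact h.symm
        · exact absurd h hij
    set F : Fin n → ℝ × ℝ := fun j => (x j, y j) with hF
    set G : Fin n → ℝ × ℝ := fun i => (u i, v i) with hG
    have keyFG : ∀ i j, U i j ≠ 0 → G i = F j := by
      intro i j hij
      obtain ⟨h1, h2⟩ := key i j hij
      simp [hF, hG, h1, h2]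
    -- column norms and row norms are 1
    have col : ∀ j, ∑ i, (U i j)^2 = 1 := by
      intro j
      have := congrFun (congrFun hU j) j
      simpa [Matrix.mul_apply, Matrix.one_apply, sq] using this
    have row : ∀ i, ∑ j, (U i j)^2 = 1 := by
      intro i
      have := congrFun (congrFun hU' i) i
      simpa [Matrix.mul_apply, Matrix.one_apply, sq] using this
    have hcard : ∀ p : ℝ × ℝ, Fintype.card {j // F j = p} = Fintype.card {i // G i = p} := by
      intro p
      set T : Finset (Fin n) := univ.filter (fun j => F j = p) with hT
      set S : Finset (Fin n) := univ.filter (fun i => G i = p) with hS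
      have hsum : ∑ j ∈ T, ∑ i ∈ S, (U i j)^2 = ∑ i ∈ S, ∑ j ∈ T, (U i j)^2 :=
        Finset.sum_comm
      have hTcard : (T.card : ℝ) = ∑ j ∈ T, ∑ i ∈ S, (U i j)^2 := by
        have : ∀ j ∈ T, ∑ i ∈ S, (U i j)^2 = 1 := by
          intro j hj
          rw [← col j]
          apply Finset.sum_subset (Finset.filter_subset _ _)
          intro i _ hiS
          have hFj : F j = p := (Finset.mem_filter.mp hj).2
          by_contra h
          have hU0 : U i j ≠ 0 := by
            intro h0; exact h (by rw [h0]; ring)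
          exact hiS (Finset.mem_filter.mpr ⟨Finset.mem_univ i, (keyFG i j hU0).trans hFj⟩)
        rw [Finset.sum_congr rfl this]
        simp
      have hScard : (S.card : ℝ) = ∑ i ∈ S, ∑ j ∈ T, (U i j)^2 := by
        have : ∀ i ∈ S, ∑ j ∈ T, (U i j)^2 = 1 := by
          intro i hi
          rw [← row i]
          apply Finset.sum_subset (Finset.filter_subset _ _)
          intro j _ hjT
          have hGi : G i = p := (Finset.mem_filter.mp hi).2
          by_contra h
          have hU0 : U i j ≠ 0 := by
            intro h0; exact h (by rw [h0]; ring)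
          exact hjT (Finset.mem_filter.mpr ⟨Finset.mem_univ j, (keyFG i j hU0).symm.trans hGi⟩)
        rw [Finset.sum_congr rfl this]
        simp
      have : (T.card : ℝ) = (S.card : ℝ) := by rw [hTcard, hScard, hsum]
      have hTS : T.card = S.card := Nat.cast_injective this
      rw [Fintype.card_subtype, Fintype.card_subtype]
      exact hTS
    obtain ⟨σ, hσ⟩ := exists_perm_of_fiber_card F G hcard
    refine ⟨σ, funext fun j => ?_, funext fun j => ?_⟩
    · exact congrArg Prod.fst (congrFun hσ j)
    · exact congrArg Prod.snd (congrFun hσ j)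
  · rintro ⟨σ, hx, hy⟩
    exact ⟨PM σ, PM_orth σ, hx ▸ PM_conj σ u, hy ▸ PM_conj σ v⟩
end

section
/- Let X be an n×n real symmetric matrix and let v₁, v₂ ∈ ℝⁿ. Suppose U₁, U₂ ∈ O(n) both satisfy X = Uᵢᵀ Diag(λ(X)) Uᵢ for i = 1,2, and that U₁ᵀ Diag(v₁) U₁ = U₂ᵀ Diag(v₂) U₂. Then there exists a permutation σ of {1,…,n} fixing the vector λ(X) (i.e., σλ(X) = λ(X)) such that σ v₁ = v₂. -/
open Matrix

/-- Conjugations and permutations: if `U₁, U₂` both diagonalize the symmetric matrix `X` with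
the nonincreasing eigenvalue vector `x = λ(X)`, and `U₁ᵀ Diag v₁ U₁ = U₂ᵀ Diag v₂ U₂`, then
`v₂` is obtained from `v₁` by a permutation fixing `x`. -/
theorem conjugations_and_permutations (n : ℕ) (X : Matrix (Fin n) (Fin n) ℝ)
    (x v₁ v₂ : Fin n → ℝ) (hx : Antitone x)
    (U₁ U₂ : Matrix (Fin n) (Fin n) ℝ)
    (hU₁ : U₁ᵀ * U₁ = 1) (hU₂ : U₂ᵀ * U₂ = 1)
    (h₁ : X = U₁ᵀ * Matrix.diagonal x * U₁) (h₂ : X = U₂ᵀ * Matrix.diagonal x * U₂)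
    (heq : U₁ᵀ * Matrix.diagonal v₁ * U₁ = U₂ᵀ * Matrix.diagonal v₂ * U₂) :
    ∃ σ : Equiv.Perm (Fin n), x ∘ σ = x ∧ v₂ = v₁ ∘ σ := by
  have hU₁' : U₁ * U₁ᵀ = 1 := mul_eq_one_comm.mp hU₁
  have hU₂' : U₂ * U₂ᵀ = 1 := mul_eq_one_comm.mp hU₂
  set W : Matrix (Fin n) (Fin n) ℝ := U₂ * U₁ᵀ with hW
  have hWo : W * Wᵀ = 1 := by
    simp only [hW, transpose_mul, transpose_transpose]
    calc U₂ * U₁ᵀ * (U₁ * U₂ᵀ) = U₂ * (U₁ᵀ * U₁) * U₂ᵀ := by noncomm_ring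
    _ = 1 := by rw [hU₁, mul_one, hU₂']
  have hWo' : Wᵀ * W = 1 := mul_eq_one_comm.mp hWo
  -- W commutes with diagonal x
  have conj : ∀ a b : Fin n → ℝ,
      U₁ᵀ * Matrix.diagonal a * U₁ = U₂ᵀ * Matrix.diagonal b * U₂ →
      W * Matrix.diagonal a = Matrix.diagonal b * W := by
    intro a b h
    have step : W * Matrix.diagonal a * Wᵀ = Matrix.diagonal b := by
      calc W * Matrix.diagonal a * Wᵀ
          = U₂ * (U₁ᵀ * Matrix.diagonal a * U₁) * U₂ᵀ := by
            simp only [hW, transpose_mul, transpose_transpose]; noncomm_ring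
      _ = U₂ * (U₂ᵀ * Matrix.diagonal b * U₂) * U₂ᵀ := by rw [h]
      _ = (U₂ * U₂ᵀ) * Matrix.diagonal b * (U₂ * U₂ᵀ) := by noncomm_ring
      _ = Matrix.diagonal b := by rw [hU₂']; simp
    calc W * Matrix.diagonal a = W * Matrix.diagonal a * (Wᵀ * W) := by rw [hWo']; simp
    _ = (W * Matrix.diagonal a * Wᵀ) * W := by noncomm_ring
    _ = Matrix.diagonal b * W := by rw [step]
  have hcx : W * Matrix.diagonal x = Matrix.diagonal x * W := conj x x (h₁ ▸ h₂)
  have hcv : W * Matrix.diagonal v₁ = Matrix.diagonal v₂ * W := conj v₁ v₂ heq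
  -- entrywise consequences
  have hx' : ∀ i j, W i j ≠ 0 → x j = x i := by
    intro i j hne
    have := congrFun (congrFun hcx i) j
    simp only [Matrix.mul_diagonal, Matrix.diagonal_mul] at this
    exact mul_left_cancel₀ hne (by rw [this]; ring)
  have hv' : ∀ i j, W i j ≠ 0 → v₁ j = v₂ i := by
    intro i j hne
    have := congrFun (congrFun hcv i) j
    simp only [Matrix.mul_diagonal, Matrix.diagonal_mul] at this
    exact mul_left_cancel₀ hne (by rw [this]; ring)
  -- the squared matrix is doubly stochastic
  set S : Matrix (Fin n) (Fin n) ℝ := Matrix.of fun i j => (W i j) ^ 2 with hS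
  have hSmem : S ∈ doublyStochastic ℝ (Fin n) := by
    rw [mem_doublyStochastic_iff_sum]
    refine ⟨fun i j => sq_nonneg _, fun i => ?_, fun j => ?_⟩
    · have := congrFun (congrFun hWo i) i
      simp only [Matrix.mul_apply, Matrix.transpose_apply, Matrix.one_apply_eq] at this
      rw [← this]
      exact Finset.sum_congr rfl fun j _ => (sq (W i j)).symm ▸ rfl
    · have := congrFun (congrFun hWo' j) j
      simp only [Matrix.mul_apply, Matrix.transpose_apply, Matrix.one_apply_eq] at this
      rw [← this]
      exact Finset.sum_congr rfl fun i _ => (sq (W i j)).symm ▸ rfl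
  obtain ⟨w, hw0, hw1, hwS⟩ := exists_eq_sum_perm_of_mem_doublyStochastic hSmem
  have hσ : ∃ σ : Equiv.Perm (Fin n), 0 < w σ := by
    by_contra hcon
    push_neg at hcon
    have : ∀ σ : Equiv.Perm (Fin n), w σ = 0 := fun σ => le_antisymm (hcon σ) (hw0 σ)
    simp [this] at hw1
  obtain ⟨σ, hσpos⟩ := hσ
  have key : ∀ i, W i (σ i) ≠ 0 := by
    intro i
    have hle : w σ • (σ.permMatrix ℝ) i (σ i) ≤ S i (σ i) := by
      rw [← hwS]
      simp only [Finset.sum_apply, Matrix.sum_apply, Matrix.smul_apply]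
      refine Finset.single_le_sum (f := fun τ : Equiv.Perm (Fin n) => w τ • (τ.permMatrix ℝ) i (σ i)) (fun τ _ => ?_) (Finset.mem_univ σ)
      have : (0:ℝ) ≤ (τ.permMatrix ℝ) i (σ i) := by
        simp [Equiv.Perm.permMatrix, PEquiv.toMatrix_apply, Equiv.toPEquiv_apply]
        split <;> norm_num
      exact smul_nonneg (hw0 τ) this
    have hpm : (σ.permMatrix ℝ) i (σ i) = 1 := by
      simp [Equiv.Perm.permMatrix, PEquiv.toMatrix_apply, Equiv.toPEquiv_apply]
    rw [hpm, smul_eq_mul, mul_one] at hle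
    have : (0:ℝ) < S i (σ i) := lt_of_lt_of_le hσpos hle
    intro hzero
    rw [hS] at this
    simp only [Matrix.of_apply, hzero] at this
    norm_num at this
  refine ⟨σ, funext fun i => ?_, funext fun i => ?_⟩
  · exact hx' i (σ i) (key i)
  · exact (hv' i (σ i) (key i)).symm
end

section
/- Let x ∈ ℝⁿ be nonincreasing with associated partition P_x = {I₁,…,I_ρ} of {1,…,n} into blocks of equal coordinates. Then the fiber λ⁻¹(x) = {Uᵀ Diag(x) U : U ∈ O(n)} is a smooth submanifold of the symmetric matrices Sⁿ of dimension Σ_{1 ≤ i < j ≤ ρ} |I_i| |I_j|. -/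
open Matrix
open scoped Classical

attribute [local instance] Matrix.normedAddCommGroup Matrix.normedSpace

/-- `M` is a `C^k` manifold of dimension `d` around `x` (in an ambient normed space). -/
def IsCkManifoldAroundDim {E : Type*} [NormedAddCommGroup E] [NormedSpace ℝ E]
    (k : ℕ∞) (d : ℕ) (M : Set E) (x : E) : Prop :=
  ∃ U : Set E, IsOpen U ∧ x ∈ U ∧ ∃ (φ ψ : E → E) (F : Submodule ℝ E),
    Module.finrank ℝ F = d ∧
    ContDiffOn ℝ k φ U ∧ ContDiffOn ℝ k ψ (φ '' U) ∧
    (∀ y ∈ U, ψ (φ y) = y) ∧ φ '' (M ∩ U) = (F : Set E) ∩ φ '' U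

/-!
Let `D = diagonal x` and let `T` be the space of symmetric matrices vanishing on the blocks
`{(i, j) | x i = x j}`; its coordinates are the entries `(i, j)` with `i < j` and `x i ≠ x j`.

The chart `φ` keeps the entries of `Y` off the blocks and replaces an entry on a block by
`p(Y) i j / p'(x i)`, where `p = ∏ (X - c)` over the distinct values `c` of `x`. By the
Daleckii–Krein formula, `Dp(D) S` is the Hadamard product of `S` with the Loewner matrix of
divided differences of `p`, so `Dφ(D) = id`. Every `Uᵀ D U` is symmetric and killed by `p`,
hence `φ` maps the orbit into `T`.

Conversely `A ↦ Qᵀ D Q`, with `Q` the Cayley transform of the skew matrix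
`K A = (A i j / (2 (x i - x j)))`, maps `T` into the orbit and has derivative
`A ↦ 2 (D K A - K A D) = A` at `0`. By the inverse function theorem `φ` therefore maps the orbit
onto a neighbourhood of `0` in `T`, so `φ` straightens the orbit onto `T` near `D`. Orthogonal
conjugation transports this chart to every point of the orbit.
-/

section SubmanifoldCriterion

open Set Filter Topology

variable {E : Type*} [NormedAddCommGroup E] [NormedSpace ℝ E]

theorem ContDiff.exists_isOpen_contDiffOn_leftInverse [CompleteSpace E] {F : Type*}
    [NormedAddCommGroup F] [NormedSpace ℝ F] {k : ℕ∞} {φ : E → F} {e : E ≃L[ℝ] F} {a : E}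
    (hφ : ContDiff ℝ k φ) (hk : k ≠ 0) (hφa : HasFDerivAt φ (e : E →L[ℝ] F) a) :
    ∃ U, IsOpen U ∧ a ∈ U ∧ ∃ ψ : F → E, ContDiffOn ℝ k ψ (φ '' U) ∧ ∀ y ∈ U, ψ (φ y) = y := by
  have hk₀ : (k : WithTop ℕ∞) ≠ 0 := mod_cast hk
  set P := hφ.contDiffAt.toOpenPartialHomeomorph φ hφa hk₀
  set V := fderiv ℝ φ ⁻¹' range ((↑) : (E ≃L[ℝ] F) → E →L[ℝ] F)
  have hV : IsOpen V :=
    ContinuousLinearEquiv.isOpen.preimage (hφ.continuous_fderiv hk₀)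
  refine ⟨P.source ∩ V, P.open_source.inter hV,
    ⟨hφ.contDiffAt.mem_toOpenPartialHomeomorph_source hφa hk₀, e, hφa.fderiv.symm⟩,
    P.symm, ?_, fun y hy => P.left_inv hy.1⟩
  rintro _ ⟨y, ⟨hyP, e', he'⟩, rfl⟩
  refine (P.contDiffAt_symm (f₀' := e') (P.map_source hyP) ?_ ?_).contDiffWithinAt <;>
    rw [P.left_inv hyP]
  · rw [he']
    exact (hφ.differentiable hk₀ y).hasFDerivAt
  · exact hφ.contDiffAt

theorem image_inter_mem_nhdsWithin_of_hasStrictFDerivAt_comp {φ : E → E} {M : Set E}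
    {F : Submodule ℝ E} [FiniteDimensional ℝ F] {Φ : F → E} (hφM : MapsTo φ M F)
    (hΦM : range Φ ⊆ M) (hΦ : ContinuousAt Φ 0) (hφΦ : HasStrictFDerivAt (φ ∘ Φ) F.subtypeL 0)
    {W : Set E} (hW : W ∈ 𝓝 (Φ 0)) : φ '' (M ∩ W) ∈ 𝓝[F] (φ (Φ 0)) := by
  obtain ⟨π, hπ⟩ := Submodule.ClosedComplemented.of_finiteDimensional F
  have hπφ : ∀ y ∈ M, (π (φ y) : E) = φ y := fun y hy => congrArg _ (hπ ⟨φ y, hφM hy⟩)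
  -- Projecting onto `F` makes `φ ∘ Φ` a self-map of `F` tangent to the identity.
  have hη : HasStrictFDerivAt (π ∘ φ ∘ Φ)
      ((ContinuousLinearEquiv.refl ℝ F : F ≃L[ℝ] F) : F →L[ℝ] F) 0 := by
    refine (π.hasStrictFDerivAt.comp 0 hφΦ).congr_fderiv ?_
    ext A
    simp [hπ]
  have hS : (π ∘ φ ∘ Φ) '' (Φ ⁻¹' W) ∈ 𝓝 ((π ∘ φ ∘ Φ) 0) := by
    rw [← hη.map_nhds_eq_of_equiv]
    exact image_mem_map (hΦ.preimage_mem_nhds hW)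
  rw [mem_nhds_subtype_iff_nhdsWithin, Function.comp_apply, Function.comp_apply,
    hπφ _ (hΦM ⟨0, rfl⟩)] at hS
  refine mem_of_superset hS ?_
  rintro _ ⟨_, ⟨A, hA, rfl⟩, rfl⟩
  exact ⟨Φ A, ⟨hΦM ⟨A, rfl⟩, hA⟩, (hπφ _ (hΦM ⟨A, rfl⟩)).symm⟩

theorem isCkManifoldAroundDim_of_chart_of_param [CompleteSpace E] {k : ℕ∞} {M : Set E} {a : E}
    {φ : E → E} {e : E ≃L[ℝ] E} {F : Submodule ℝ E} [FiniteDimensional ℝ F] {Φ : F → E}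
    (hφ : ContDiff ℝ k φ) (hk : k ≠ 0) (hφ' : HasFDerivAt φ (e : E →L[ℝ] E) a)
    (hφM : MapsTo φ M F) (hΦM : range Φ ⊆ M) (hΦ0 : Φ 0 = a) (hΦ : ContDiffAt ℝ 1 Φ 0)
    (hφΦ : HasFDerivAt (φ ∘ Φ) F.subtypeL 0) :
    IsCkManifoldAroundDim k (Module.finrank ℝ F) M a := by
  subst hΦ0
  obtain ⟨U₀, hU₀, haU₀, ψ, hψ, hψφ⟩ := hφ.exists_isOpen_contDiffOn_leftInverse hk hφ'
  have hφ₁ : ContDiff ℝ 1 φ := hφ.of_le (mod_cast Order.one_le_iff_ne_zero.mpr hk)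
  have hstrict : HasStrictFDerivAt (φ ∘ Φ) F.subtypeL 0 :=
    (hφ₁.contDiffAt.comp 0 hΦ).hasStrictFDerivAt' hφΦ one_ne_zero
  obtain ⟨V, hV, haV, hVF⟩ := mem_nhdsWithin.mp
    (image_inter_mem_nhdsWithin_of_hasStrictFDerivAt_comp hφM hΦM hΦ.continuousAt hstrict
      (hU₀.mem_nhds haU₀))
  refine ⟨U₀ ∩ φ ⁻¹' V, hU₀.inter (hV.preimage hφ.continuous), ⟨haU₀, haV⟩, φ, ψ, F, rfl,
    hφ.contDiffOn, hψ.mono (image_mono inter_subset_left), fun y hy => hψφ y hy.1, ?_⟩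
  ext z
  constructor
  · rintro ⟨y, ⟨hyM, hyU⟩, rfl⟩
    exact ⟨hφM hyM, y, hyU, rfl⟩
  · rintro ⟨hzF, y, hyU, rfl⟩
    obtain ⟨y', ⟨hy'M, hy'U₀⟩, hy'⟩ := hVF ⟨hyU.2, hzF⟩
    have hyy' : y' = y := by rw [← hψφ y' hy'U₀, hy', hψφ y hyU.1]
    exact ⟨y, ⟨hyy' ▸ hy'M, hyU⟩, rfl⟩

theorem IsCkManifoldAroundDim.preimage_continuousLinearEquiv {k : ℕ∞} {d : ℕ} {M : Set E}
    {a : E} (e : E ≃L[ℝ] E) (h : IsCkManifoldAroundDim k d M (e a)) :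
    IsCkManifoldAroundDim k d (e ⁻¹' M) a := by
  obtain ⟨U, hU, haU, φ, ψ, F, hF, hφ, hψ, hψφ, himage⟩ := h
  have hUe : (φ ∘ e) '' (e ⁻¹' U) = φ '' U := by
    rw [image_comp, image_preimage_eq U e.surjective]
  refine ⟨e ⁻¹' U, hU.preimage e.continuous, haU, φ ∘ e, e.symm ∘ ψ, F, hF,
    hφ.comp e.contDiff.contDiffOn (mapsTo_preimage _ _), ?_, fun y hy => by simp [hψφ _ hy], ?_⟩
  · rw [hUe]
    exact e.symm.contDiff.comp_contDiffOn hψ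
  · rw [hUe, ← preimage_inter, image_comp, image_preimage_eq _ e.surjective, himage]

end SubmanifoldCriterion

section MatrixCalculus

open Filter Topology

variable {m : Type*} [Fintype m] {X : Type*} [NormedAddCommGroup X] [NormedSpace ℝ X]

theorem isBoundedBilinearMap_matrix_mul :
    IsBoundedBilinearMap ℝ (fun p : Matrix m m ℝ × Matrix m m ℝ => p.1 * p.2) where
  add_left := Matrix.add_mul
  smul_left c A B := Matrix.smul_mul c A B
  add_right := Matrix.mul_add
  smul_right c A B := Matrix.mul_smul A c B
  bound := by
    refine ⟨Fintype.card m + 1, by positivity, fun A B => ?_⟩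
    refine (Matrix.norm_le_iff (by positivity)).mpr fun i j => ?_
    calc ‖(A * B) i j‖ ≤ ∑ k, ‖A i k‖ * ‖B k j‖ := by
          rw [Matrix.mul_apply]
          exact (norm_sum_le _ _).trans_eq (by simp_rw [norm_mul])
      _ ≤ ∑ _k : m, ‖A‖ * ‖B‖ := by
          gcongr <;> exact Matrix.norm_entry_le_entrywise_sup_norm _
      _ ≤ (Fintype.card m + 1) * ‖A‖ * ‖B‖ := by
          rw [Finset.sum_const, Finset.card_univ, nsmul_eq_mul, mul_assoc]
          gcongr
          linarith

-- Applied to `v`, this derivative is definitionally `f a * g' v + f' v * g a`. The derivative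
-- computations below prove that matrix identity and close the goal by `exact`: rewriting cannot
-- see through the two (defeq) topologies on `Matrix`, the product one and the normed one.
theorem HasFDerivAt.matrix_mul {f g : X → Matrix m m ℝ} {f' g' : X →L[ℝ] Matrix m m ℝ} {a : X}
    (hf : HasFDerivAt f f' a) (hg : HasFDerivAt g g' a) :
    HasFDerivAt (fun y => f y * g y)
      (isBoundedBilinearMap_matrix_mul.deriv (f a, g a) ∘L f'.prod g') a :=
  (isBoundedBilinearMap_matrix_mul.hasFDerivAt (f a, g a)).comp (f := fun y => (f y, g y)) a
    (hf.prodMk hg)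

theorem ContDiffAt.matrix_mul {k : WithTop ℕ∞} {f g : X → Matrix m m ℝ} {a : X}
    (hf : ContDiffAt ℝ k f a) (hg : ContDiffAt ℝ k g a) :
    ContDiffAt ℝ k (fun y => f y * g y) a :=
  isBoundedBilinearMap_matrix_mul.contDiff.contDiffAt.comp a (hf.prodMk hg)

theorem ContDiff.matrix_mul {k : WithTop ℕ∞} {f g : X → Matrix m m ℝ}
    (hf : ContDiff ℝ k f) (hg : ContDiff ℝ k g) : ContDiff ℝ k (fun y => f y * g y) :=
  isBoundedBilinearMap_matrix_mul.contDiff.comp (hf.prodMk hg)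

noncomputable def hadamardCLM {n : Type*} [Fintype n] (C : Matrix m n ℝ) :
    Matrix m n ℝ →L[ℝ] Matrix m n ℝ :=
  LinearMap.toContinuousLinearMap
    { toFun := (C ⊙ ·)
      map_add' := fun A B => Matrix.hadamard_add C A B
      map_smul' := fun c B => Matrix.hadamard_smul C B c }

variable [DecidableEq m]

theorem contDiff_det {k : WithTop ℕ∞} : ContDiff ℝ k (fun A : Matrix m m ℝ => A.det) := by
  simp_rw [Matrix.det_apply, Units.smul_def, zsmul_eq_mul]
  exact ContDiff.sum fun σ _ =>
    contDiff_const.mul (contDiff_prod fun i _ => contDiff_apply_apply ℝ ℝ (σ i) i)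

theorem contDiff_adjugate {k : WithTop ℕ∞} :
    ContDiff ℝ k (fun A : Matrix m m ℝ => A.adjugate) := by
  refine contDiff_pi.mpr fun i => contDiff_pi.mpr fun j => ?_
  simp_rw [Matrix.adjugate_apply]
  refine contDiff_det.comp (contDiff_pi.mpr fun r => contDiff_pi.mpr fun c => ?_)
  by_cases hr : r = j
  · simpa [hr] using contDiff_const
  · simp only [Matrix.updateRow_ne hr]
    exact contDiff_apply_apply ℝ ℝ r c

theorem contDiffAt_matrix_inv {k : WithTop ℕ∞} {A : Matrix m m ℝ} (hA : A.det ≠ 0) :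
    ContDiffAt ℝ k (fun B : Matrix m m ℝ => B⁻¹) A := by
  simp_rw [Matrix.inv_def, Ring.inverse_eq_inv']
  exact (contDiff_det.contDiffAt.inv hA).smul contDiff_adjugate.contDiffAt

theorem hasFDerivAt_matrix_inv_one :
    HasFDerivAt (fun B : Matrix m m ℝ => B⁻¹) (-ContinuousLinearMap.id ℝ (Matrix m m ℝ)) 1 := by
  have hinv : HasFDerivAt (fun B : Matrix m m ℝ => B⁻¹) (fderiv ℝ (fun B => B⁻¹) 1) 1 :=
    ((contDiffAt_matrix_inv (k := 1) (by simp)).differentiableAt one_ne_zero).hasFDerivAt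
  have hdet : ∀ᶠ B : Matrix m m ℝ in 𝓝 1, IsUnit B.det :=
    (contDiff_det (k := 0)).continuous.continuousAt.eventually
      (isOpen_ne.mem_nhds (by simp : (1 : Matrix m m ℝ).det ≠ 0)) |>.mono
      fun B hB => isUnit_iff_ne_zero.mpr hB
  have hprod := ((hasFDerivAt_id (1 : Matrix m m ℝ)).matrix_mul hinv).congr_of_eventuallyEq
    (hdet.mono fun B hB => (Matrix.mul_nonsing_inv B hB).symm)
  refine hinv.congr_fderiv (ContinuousLinearMap.ext fun S => ?_)
  have hS : 1 * fderiv ℝ (fun B : Matrix m m ℝ => B⁻¹) 1 S + S * 1⁻¹ = 0 :=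
    congrArg (· S) (hprod.unique (hasFDerivAt_const 1 1))
  rw [one_mul, inv_one, mul_one] at hS
  exact eq_neg_of_add_eq_zero_left hS

end MatrixCalculus

section Cayley

variable {m : Type*} [Fintype m] [DecidableEq m]

theorem isUnit_det_one_add_of_transpose_eq_neg {h : Matrix m m ℝ} (hh : hᵀ = -h) :
    IsUnit (1 + h).det := by
  rw [isUnit_iff_ne_zero]
  intro hdet
  obtain ⟨v, hv, hv0⟩ := Matrix.exists_mulVec_eq_zero_iff.mpr hdet
  have hskew : v ⬝ᵥ (h *ᵥ v) = 0 := by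
    have h1 : v ⬝ᵥ (h *ᵥ v) = (hᵀ *ᵥ v) ⬝ᵥ v := by
      rw [Matrix.mulVec_transpose, Matrix.dotProduct_mulVec]
    rw [hh, Matrix.neg_mulVec, neg_dotProduct, dotProduct_comm (h *ᵥ v) v] at h1
    linarith
  have hvv : v ⬝ᵥ v = 0 := by
    simpa [Matrix.add_mulVec, hskew] using congrArg (v ⬝ᵥ ·) hv0
  exact hv (dotProduct_self_eq_zero.mp hvv)

noncomputable def cayley (h : Matrix m m ℝ) : Matrix m m ℝ := (1 - h)⁻¹ * (1 + h)

theorem cayley_neg_mul_self {h : Matrix m m ℝ} (hh : hᵀ = -h) : cayley (-h) * cayley h = 1 := by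
  have hminus : IsUnit (1 - h).det := by
    simpa [sub_eq_add_neg] using isUnit_det_one_add_of_transpose_eq_neg (h := -h) (by simp [hh])
  rw [cayley, cayley, sub_neg_eq_add, ← sub_eq_add_neg, Matrix.mul_assoc,
    ← Matrix.mul_assoc (1 - h), Matrix.mul_nonsing_inv _ hminus, Matrix.one_mul,
    Matrix.nonsing_inv_mul _ (isUnit_det_one_add_of_transpose_eq_neg hh)]

theorem cayley_transpose {h : Matrix m m ℝ} (hh : hᵀ = -h) : (cayley h)ᵀ = cayley (-h) := by
  have hplus := isUnit_det_one_add_of_transpose_eq_neg hh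
  rw [cayley, cayley, Matrix.transpose_mul, Matrix.transpose_nonsing_inv, Matrix.transpose_add,
    Matrix.transpose_sub, Matrix.transpose_one, hh, sub_neg_eq_add, ← sub_eq_add_neg]
  calc (1 - h) * (1 + h)⁻¹ = (1 + h)⁻¹ * ((1 + h) * (1 - h)) * (1 + h)⁻¹ := by
        rw [← Matrix.mul_assoc, Matrix.nonsing_inv_mul _ hplus, Matrix.one_mul]
    _ = (1 + h)⁻¹ * (1 - h) := by
        rw [show (1 + h) * (1 - h) = (1 - h) * (1 + h) by noncomm_ring, Matrix.mul_assoc,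
          Matrix.mul_assoc, Matrix.mul_nonsing_inv _ hplus, Matrix.mul_one]

theorem contDiffAt_cayley_zero {k : WithTop ℕ∞} : ContDiffAt ℝ k (cayley (m := m)) 0 :=
  ((contDiffAt_matrix_inv (by simp)).comp 0 (contDiffAt_const.sub contDiffAt_id)).matrix_mul
    (contDiffAt_const.add contDiffAt_id)

theorem hasFDerivAt_cayley_zero :
    HasFDerivAt (cayley (m := m)) ((2 : ℝ) • ContinuousLinearMap.id ℝ (Matrix m m ℝ)) 0 := by
  have hinv : HasFDerivAt (fun h : Matrix m m ℝ => (1 - h)⁻¹) (ContinuousLinearMap.id ℝ _) 0 := by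
    have h := HasFDerivAt.comp (g := fun B : Matrix m m ℝ => B⁻¹) 0 (by
      rw [id, sub_zero]; exact hasFDerivAt_matrix_inv_one) ((hasFDerivAt_id _).const_sub 1)
    exact h.congr_fderiv (ContinuousLinearMap.ext fun S => neg_neg S)
  refine (hinv.matrix_mul ((hasFDerivAt_id _).const_add 1)).congr_fderiv
    (ContinuousLinearMap.ext fun S => ?_)
  have hS : (1 - 0 : Matrix m m ℝ)⁻¹ * S + S * (1 + 0) = (2 : ℝ) • S := by
    rw [sub_zero, add_zero, inv_one, one_mul, mul_one, two_smul]
  exact hS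

variable {X : Type*} [NormedAddCommGroup X] [NormedSpace ℝ X]

theorem contDiffAt_cayley_conj {k : WithTop ℕ∞} (K : X →L[ℝ] Matrix m m ℝ) (D : Matrix m m ℝ) :
    ContDiffAt ℝ k (fun v => cayley (-K v) * D * cayley (K v)) 0 := by
  have hcayley : ContDiffAt ℝ k cayley (K 0) := by
    rw [map_zero]; exact contDiffAt_cayley_zero
  have hcayley' : ContDiffAt ℝ k cayley (-K 0) := by
    rw [map_zero, neg_zero]; exact contDiffAt_cayley_zero
  have hK := hcayley.comp (f := fun v => K v) 0 K.contDiff.contDiffAt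
  have hK' := hcayley'.comp (f := fun v => -K v) 0 K.contDiff.neg.contDiffAt
  exact (hK'.matrix_mul contDiffAt_const).matrix_mul hK

theorem hasFDerivAt_cayley_conj (K : X →L[ℝ] Matrix m m ℝ) (D : Matrix m m ℝ)
    {L : X →L[ℝ] Matrix m m ℝ} (hL : ∀ v, L v = (2 : ℝ) • (D * K v - K v * D)) :
    HasFDerivAt (fun v => cayley (-K v) * D * cayley (K v)) L 0 := by
  have hcayley : HasFDerivAt cayley ((2 : ℝ) • ContinuousLinearMap.id ℝ _) (K 0) := by
    rw [map_zero]; exact hasFDerivAt_cayley_zero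
  have hcayley' : HasFDerivAt cayley ((2 : ℝ) • ContinuousLinearMap.id ℝ _) (-K 0) := by
    rw [map_zero, neg_zero]; exact hasFDerivAt_cayley_zero
  have hK := hcayley.comp 0 K.hasFDerivAt
  have hK' := hcayley'.comp 0 K.hasFDerivAt.neg
  refine ((hK'.matrix_mul (hasFDerivAt_const D 0)).matrix_mul hK).congr_fderiv
    (ContinuousLinearMap.ext fun v => ?_)
  have hv : cayley (-K 0) * D * ((2 : ℝ) • K v)
      + (cayley (-K 0) * 0 + ((2 : ℝ) • -K v) * D) * cayley (K 0) = L v := by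
    simp [hL, cayley, sub_eq_add_neg]
  exact hv

end Cayley

section PolynomialCalculus

open Polynomial

variable {m : Type*}

noncomputable def loewnerMatrix (p : ℝ[X]) (x : m → ℝ) : Matrix m m ℝ :=
  Matrix.of fun i j =>
    if x i = x j then p.derivative.eval (x i) else (p.eval (x i) - p.eval (x j)) / (x i - x j)

theorem loewnerMatrix_C (c : ℝ) (x : m → ℝ) : loewnerMatrix (C c) x = 0 := by
  ext i j
  simp [loewnerMatrix]

theorem loewnerMatrix_add (p q : ℝ[X]) (x : m → ℝ) :
    loewnerMatrix (p + q) x = loewnerMatrix p x + loewnerMatrix q x := by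
  ext i j
  simp only [loewnerMatrix, Matrix.of_apply, Matrix.add_apply, derivative_add, eval_add]
  split_ifs <;> ring

theorem loewnerMatrix_mul_X_apply (p : ℝ[X]) (x : m → ℝ) (i j : m) :
    loewnerMatrix (p * X) x i j = p.eval (x i) + x j * loewnerMatrix p x i j := by
  simp only [loewnerMatrix, Matrix.of_apply, derivative_mul, derivative_X, eval_add, eval_mul,
    eval_X, eval_one]
  split_ifs with h
  · rw [h]; ring
  · field_simp [sub_ne_zero.mpr h]
    ring

variable [Fintype m] [DecidableEq m]

theorem Matrix.aeval_diagonal {R : Type*} [CommSemiring R] (x : m → R) (p : R[X]) :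
    aeval (Matrix.diagonal x) p = Matrix.diagonal fun i => p.eval (x i) := by
  rw [← Matrix.diagonalAlgHom_apply (R := R), aeval_algHom_apply, aeval_pi_apply]
  rfl

theorem Matrix.aeval_transpose_mul_mul {R : Type*} [CommRing R] {U : Matrix m m R}
    (hU : Uᵀ * U = 1) (A : Matrix m m R) (p : R[X]) :
    aeval (Uᵀ * A * U) p = Uᵀ * aeval A p * U := by
  have hU' : U * Uᵀ = 1 := mul_eq_one_comm.mp hU
  induction p using Polynomial.induction_on with
  | C c => simp [Algebra.algebraMap_eq_smul_one, hU]
  | add p q hp hq => simp [hp, hq, Matrix.mul_add, Matrix.add_mul]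
  | monomial k c ih =>
    rw [pow_succ, ← mul_assoc, aeval_mul (p := C c * X ^ k) (q := X),
      aeval_mul (p := C c * X ^ k) (q := X), ih, aeval_X, aeval_X]
    simp only [Matrix.mul_assoc]
    rw [← Matrix.mul_assoc U Uᵀ, hU', Matrix.one_mul]

theorem contDiff_aeval {k : WithTop ℕ∞} (p : ℝ[X]) :
    ContDiff ℝ k (fun Y : Matrix m m ℝ => aeval Y p) := by
  induction p using Polynomial.induction_on with
  | C c => simpa using contDiff_const
  | add p q hp hq => simpa using hp.add hq
  | monomial k c ih =>
    simp only [pow_succ, ← mul_assoc, aeval_mul (p := C c * X ^ k) (q := X), aeval_X]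
    exact ih.matrix_mul contDiff_id

theorem hasFDerivAt_aeval_diagonal (p : ℝ[X]) (x : m → ℝ) :
    HasFDerivAt (fun Y : Matrix m m ℝ => aeval Y p) (hadamardCLM (loewnerMatrix p x))
      (Matrix.diagonal x) := by
  induction p using Polynomial.induction_on with
  | C c =>
    simp only [aeval_C]
    refine (hasFDerivAt_const _ _).congr_fderiv (ContinuousLinearMap.ext fun S => ?_)
    have hS : (0 : Matrix m m ℝ) = loewnerMatrix (C c) x ⊙ S := by
      rw [loewnerMatrix_C, Matrix.zero_hadamard]
    exact hS
  | add p q hp hq =>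
    simp only [map_add]
    refine (hp.add hq).congr_fderiv (ContinuousLinearMap.ext fun S => ?_)
    have hS : loewnerMatrix p x ⊙ S + loewnerMatrix q x ⊙ S = loewnerMatrix (p + q) x ⊙ S := by
      rw [loewnerMatrix_add, Matrix.add_hadamard]
    exact hS
  | monomial k c ih =>
    simp only [pow_succ, ← mul_assoc, aeval_mul (p := C c * X ^ k) (q := X), aeval_X]
    refine (ih.matrix_mul (hasFDerivAt_id _)).congr_fderiv (ContinuousLinearMap.ext fun S => ?_)
    have hS : aeval (Matrix.diagonal x) (C c * X ^ k) * S
        + loewnerMatrix (C c * X ^ k) x ⊙ S * Matrix.diagonal x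
        = loewnerMatrix (C c * X ^ k * X) x ⊙ S := by
      ext i j
      simp only [Matrix.aeval_diagonal, Matrix.diagonal_mul, Matrix.mul_diagonal, Matrix.add_apply,
        Matrix.hadamard_apply, loewnerMatrix_mul_X_apply]
      ring
    exact hS

end PolynomialCalculus

section OffBlockSymm

open Finset

variable {m : Type*} (x : m → ℝ)

def offBlockSymm : Submodule ℝ (Matrix m m ℝ) where
  carrier := {A | Aᵀ = A ∧ ∀ i j, x i = x j → A i j = 0}
  add_mem' {A B} hA hB := ⟨by rw [Matrix.transpose_add, hA.1, hB.1], fun i j h => by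
    simp [hA.2 i j h, hB.2 i j h]⟩
  zero_mem' := ⟨Matrix.transpose_zero, fun _ _ _ => rfl⟩
  smul_mem' c A hA := ⟨by rw [Matrix.transpose_smul, hA.1], fun i j h => by simp [hA.2 i j h]⟩

variable [Fintype m] [LinearOrder m]

noncomputable def offBlockSymmEquiv :
    offBlockSymm x ≃ₗ[ℝ] ({p : m × m // p.1 < p.2 ∧ x p.1 ≠ x p.2} → ℝ) where
  toFun A p := (A : Matrix m m ℝ) p.1.1 p.1.2
  map_add' _ _ := rfl
  map_smul' _ _ := rfl
  invFun c := ⟨Matrix.of fun i j =>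
      if h : i < j ∧ x i ≠ x j then c ⟨(i, j), h⟩
      else if h' : j < i ∧ x j ≠ x i then c ⟨(j, i), h'⟩ else 0, by
    refine ⟨Matrix.ext fun i j => ?_, fun i j hij => by simp [hij]⟩
    simp only [Matrix.transpose_apply, Matrix.of_apply]
    split_ifs <;> first | rfl | grind⟩
  left_inv := by
    rintro ⟨A, hAt, hA0⟩
    ext i j
    simp only [Matrix.of_apply]
    split_ifs with h h'
    · rfl
    · exact congrFun (congrFun hAt i) j
    · refine (hA0 i j ?_).symm
      by_contra hne
      rcases lt_trichotomy i j with hij | rfl | hij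
      · exact h ⟨hij, hne⟩
      · exact hne rfl
      · exact h' ⟨hij, Ne.symm hne⟩
  right_inv c := funext fun ⟨⟨i, j⟩, h⟩ => by simp [h]

theorem finrank_offBlockSymm :
    Module.finrank ℝ (offBlockSymm x) = #{p : m × m | p.1 < p.2 ∧ x p.1 ≠ x p.2} := by
  rw [(offBlockSymmEquiv x).finrank_eq, Module.finrank_fintype_fun_eq_card, Fintype.card_subtype]

end OffBlockSymm

section DiagonalOrbit

open Polynomial

variable {m : Type*} (x : m → ℝ)

-- On the blocks `x i = x j` the weight is `0⁻¹ = 0`.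
noncomputable def gapWeights : Matrix m m ℝ := Matrix.of fun i j => (2 * (x i - x j))⁻¹

theorem transpose_gapWeights_hadamard {A : Matrix m m ℝ} (hA : Aᵀ = A) :
    (gapWeights x ⊙ A)ᵀ = -(gapWeights x ⊙ A) := by
  ext i j
  have hji : A j i = A i j := by rw [← Matrix.transpose_apply A i j, hA]
  simp only [Matrix.transpose_apply, Matrix.neg_apply, Matrix.hadamard_apply, gapWeights,
    Matrix.of_apply, hji]
  rw [← neg_sub (x i) (x j), mul_neg, inv_neg, neg_mul]

variable [Fintype m]

noncomputable def nodalOfRange : ℝ[X] := Lagrange.nodal (Finset.univ.image x) id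

theorem eval_nodalOfRange (i : m) : (nodalOfRange x).eval (x i) = 0 :=
  Lagrange.eval_nodal_at_node (v := id) (Finset.mem_image_of_mem x (Finset.mem_univ i))

theorem eval_derivative_nodalOfRange_ne_zero (i : m) :
    (nodalOfRange x).derivative.eval (x i) ≠ 0 := by
  have hi := Finset.mem_image_of_mem x (Finset.mem_univ i)
  have hw := Lagrange.nodalWeight_ne_zero (Set.injOn_id _) hi
  rw [Lagrange.nodalWeight_eq_eval_derivative_nodal hi] at hw
  exact fun h => hw (inv_eq_zero.mpr h)

variable [DecidableEq m]

def diagonalOrbit : Set (Matrix m m ℝ) :=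
  {X | ∃ U : Matrix m m ℝ, Uᵀ * U = 1 ∧ X = Uᵀ * Matrix.diagonal x * U}

variable {x}

theorem transpose_mul_mul_mem_diagonalOrbit {W Y : Matrix m m ℝ} (hW : Wᵀ * W = 1)
    (hY : Y ∈ diagonalOrbit x) : Wᵀ * Y * W ∈ diagonalOrbit x := by
  obtain ⟨U, hU, rfl⟩ := hY
  refine ⟨U * W, ?_, ?_⟩
  · rw [Matrix.transpose_mul, Matrix.mul_assoc, ← Matrix.mul_assoc Uᵀ, hU, Matrix.one_mul, hW]
  · simp only [Matrix.transpose_mul, Matrix.mul_assoc]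

theorem transpose_eq_of_mem_diagonalOrbit {Y : Matrix m m ℝ} (hY : Y ∈ diagonalOrbit x) :
    Yᵀ = Y := by
  obtain ⟨U, -, rfl⟩ := hY
  simp [Matrix.transpose_mul, Matrix.mul_assoc]

variable (x)

theorem aeval_nodalOfRange_of_mem {Y : Matrix m m ℝ} (hY : Y ∈ diagonalOrbit x) :
    aeval Y (nodalOfRange x) = 0 := by
  obtain ⟨U, hU, rfl⟩ := hY
  rw [Matrix.aeval_transpose_mul_mul hU, Matrix.aeval_diagonal]
  simp [eval_nodalOfRange]

noncomputable def offBlockMask : Matrix m m ℝ := Matrix.of fun i j => if x i = x j then 0 else 1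

noncomputable def blockWeights : Matrix m m ℝ :=
  Matrix.of fun i j => if x i = x j then ((nodalOfRange x).derivative.eval (x i))⁻¹ else 0

noncomputable def orbitChart (Y : Matrix m m ℝ) : Matrix m m ℝ :=
  offBlockMask x ⊙ Y + blockWeights x ⊙ aeval Y (nodalOfRange x)

theorem contDiff_orbitChart {k : WithTop ℕ∞} : ContDiff ℝ k (orbitChart x) :=
  (hadamardCLM (offBlockMask x)).contDiff.add
    ((hadamardCLM (blockWeights x)).contDiff.comp (contDiff_aeval (nodalOfRange x)))

theorem hasFDerivAt_orbitChart :
    HasFDerivAt (orbitChart x) (ContinuousLinearMap.id ℝ _) (Matrix.diagonal x) := by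
  have hp := (hadamardCLM (blockWeights x)).hasFDerivAt.comp (Matrix.diagonal x)
    (hasFDerivAt_aeval_diagonal (nodalOfRange x) x)
  refine ((hadamardCLM (offBlockMask x)).hasFDerivAt.add hp).congr_fderiv
    (ContinuousLinearMap.ext fun S => ?_)
  have hS : offBlockMask x ⊙ S + blockWeights x ⊙ (loewnerMatrix (nodalOfRange x) x ⊙ S) = S := by
    ext i j
    simp only [Matrix.add_apply, Matrix.hadamard_apply, offBlockMask, blockWeights, loewnerMatrix,
      Matrix.of_apply]
    split_ifs
    · rw [zero_mul, zero_add, ← mul_assoc,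
        inv_mul_cancel₀ (eval_derivative_nodalOfRange_ne_zero x i), one_mul]
    · ring
  exact hS

theorem orbitChart_mem_offBlockSymm {Y : Matrix m m ℝ} (hY : Y ∈ diagonalOrbit x) :
    orbitChart x Y ∈ offBlockSymm x := by
  rw [orbitChart, aeval_nodalOfRange_of_mem x hY, Matrix.hadamard_zero, add_zero]
  refine ⟨Matrix.ext fun i j => ?_, fun i j h => by simp [offBlockMask, h]⟩
  have hYij : Y j i = Y i j := by
    rw [← Matrix.transpose_apply Y i j, transpose_eq_of_mem_diagonalOrbit hY]
  simp only [Matrix.transpose_apply, Matrix.hadamard_apply, offBlockMask, Matrix.of_apply, hYij,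
    eq_comm (a := x j)]

noncomputable def orbitParam (A : offBlockSymm x) : Matrix m m ℝ :=
  cayley (-(gapWeights x ⊙ A)) * Matrix.diagonal x * cayley (gapWeights x ⊙ A)

theorem orbitParam_mem (A : offBlockSymm x) : orbitParam x A ∈ diagonalOrbit x := by
  have hskew := transpose_gapWeights_hadamard x A.2.1
  exact ⟨cayley (gapWeights x ⊙ A), by rw [cayley_transpose hskew, cayley_neg_mul_self hskew],
    by rw [cayley_transpose hskew, orbitParam]⟩

theorem orbitParam_zero : orbitParam x 0 = Matrix.diagonal x := by
  simp [orbitParam, cayley]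

theorem contDiffAt_orbitParam {k : WithTop ℕ∞} : ContDiffAt ℝ k (orbitParam x) 0 :=
  contDiffAt_cayley_conj (hadamardCLM (gapWeights x) ∘L (offBlockSymm x).subtypeL) _

theorem hasFDerivAt_orbitParam : HasFDerivAt (orbitParam x) (offBlockSymm x).subtypeL 0 := by
  refine hasFDerivAt_cayley_conj (hadamardCLM (gapWeights x) ∘L (offBlockSymm x).subtypeL) _
    fun A => ?_
  have hA : (A : Matrix m m ℝ) = (2 : ℝ) •
      (Matrix.diagonal x * (gapWeights x ⊙ A) - (gapWeights x ⊙ A) * Matrix.diagonal x) := by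
    ext i j
    simp only [Matrix.smul_apply, Matrix.sub_apply, Matrix.diagonal_mul, Matrix.mul_diagonal,
      Matrix.hadamard_apply, gapWeights, Matrix.of_apply, smul_eq_mul]
    by_cases h : x i = x j
    · simp [A.2.2 i j h]
    · field_simp [sub_ne_zero.mpr h]
  exact hA

theorem isCkManifoldAroundDim_diagonalOrbit_diagonal {k : ℕ∞} (hk : k ≠ 0) :
    IsCkManifoldAroundDim k (Module.finrank ℝ (offBlockSymm x)) (diagonalOrbit x)
      (Matrix.diagonal x) := by
  refine isCkManifoldAroundDim_of_chart_of_param (contDiff_orbitChart x) hk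
    (e := ContinuousLinearEquiv.refl ℝ _) (hasFDerivAt_orbitChart x)
    (fun Y hY => orbitChart_mem_offBlockSymm x hY) (Set.range_subset_iff.mpr (orbitParam_mem x))
    (orbitParam_zero x) (contDiffAt_orbitParam x) ?_
  have hchart := hasFDerivAt_orbitChart x
  rw [← orbitParam_zero x] at hchart
  exact hchart.comp 0 (hasFDerivAt_orbitParam x)

noncomputable def orthogonalConj {V : Matrix m m ℝ} (hV : Vᵀ * V = 1) :
    Matrix m m ℝ ≃L[ℝ] Matrix m m ℝ :=
  LinearEquiv.toContinuousLinearEquiv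
    { toFun A := V * A * Vᵀ
      invFun A := Vᵀ * A * V
      map_add' A B := by rw [Matrix.mul_add, Matrix.add_mul]
      map_smul' c A := by rw [Matrix.mul_smul, Matrix.smul_mul]; rfl
      left_inv A := by
        simp only [← Matrix.mul_assoc, hV, Matrix.one_mul]
        rw [Matrix.mul_assoc, hV, Matrix.mul_one]
      right_inv A := by
        have hV' : V * Vᵀ = 1 := mul_eq_one_comm.mp hV
        simp only [← Matrix.mul_assoc, hV', Matrix.one_mul]
        rw [Matrix.mul_assoc, hV', Matrix.mul_one] }

theorem orthogonalConj_apply {V : Matrix m m ℝ} (hV : Vᵀ * V = 1) (A : Matrix m m ℝ) :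
    orthogonalConj hV A = V * A * Vᵀ := rfl

theorem orthogonalConj_symm_apply {V : Matrix m m ℝ} (hV : Vᵀ * V = 1) (A : Matrix m m ℝ) :
    (orthogonalConj hV).symm A = Vᵀ * A * V := rfl

theorem preimage_orthogonalConj_diagonalOrbit {V : Matrix m m ℝ} (hV : Vᵀ * V = 1) :
    orthogonalConj hV ⁻¹' diagonalOrbit x = diagonalOrbit x := by
  ext A
  refine ⟨fun hA => ?_, fun hA => ?_⟩
  · have hA' := transpose_mul_mul_mem_diagonalOrbit hV hA
    rwa [← orthogonalConj_symm_apply hV, ContinuousLinearEquiv.symm_apply_apply] at hA'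
  · have hVt : (Vᵀ)ᵀ * Vᵀ = 1 := by rw [Matrix.transpose_transpose, mul_eq_one_comm.mp hV]
    have hA' := transpose_mul_mul_mem_diagonalOrbit hVt hA
    rwa [Matrix.transpose_transpose, ← orthogonalConj_apply hV] at hA'

theorem isCkManifoldAroundDim_diagonalOrbit {k : ℕ∞} (hk : k ≠ 0) {X : Matrix m m ℝ}
    (hX : X ∈ diagonalOrbit x) :
    IsCkManifoldAroundDim k (Module.finrank ℝ (offBlockSymm x)) (diagonalOrbit x) X := by
  obtain ⟨V, hV, rfl⟩ := hX
  rw [← preimage_orthogonalConj_diagonalOrbit x hV]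
  refine IsCkManifoldAroundDim.preimage_continuousLinearEquiv _ ?_
  have hD : orthogonalConj hV (Vᵀ * Matrix.diagonal x * V) = Matrix.diagonal x :=
    (orthogonalConj hV).apply_symm_apply _
  convert isCkManifoldAroundDim_diagonalOrbit_diagonal x hk
  exact hD

end DiagonalOrbit

theorem eigenvalue_fiber_is_manifold_general (n : ℕ) (x : Fin n → ℝ) :
    ∀ X ∈ {X : Matrix (Fin n) (Fin n) ℝ |
        ∃ U : Matrix (Fin n) (Fin n) ℝ, Uᵀ * U = 1 ∧ X = Uᵀ * Matrix.diagonal x * U},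
      IsCkManifoldAroundDim (⊤ : ℕ∞)
        ((Finset.univ.filter fun p : Fin n × Fin n => p.1 < p.2 ∧ x p.1 ≠ x p.2).card)
        {X : Matrix (Fin n) (Fin n) ℝ |
          ∃ U : Matrix (Fin n) (Fin n) ℝ, Uᵀ * U = 1 ∧ X = Uᵀ * Matrix.diagonal x * U} X := by
  intro X hX
  rw [← finrank_offBlockSymm]
  exact isCkManifoldAroundDim_diagonalOrbit x ENat.top_ne_zero hX

/-- The fiber `λ⁻¹(x) = {Uᵀ Diag(x) U : U ∈ O(n)}` over a nonincreasing vector `x` is a smooth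
submanifold of the symmetric matrices of dimension `Σ_{i<j} |I_i||I_j|`, i.e. the number of
pairs `i < j` with `x i ≠ x j`. -/
theorem eigenvalue_fiber_is_manifold (n : ℕ) (x : Fin n → ℝ) (hx : Antitone x) :
    ∀ X ∈ {X : Matrix (Fin n) (Fin n) ℝ |
        ∃ U : Matrix (Fin n) (Fin n) ℝ, Uᵀ * U = 1 ∧ X = Uᵀ * Matrix.diagonal x * U},
      IsCkManifoldAroundDim (⊤ : ℕ∞)
        ((Finset.univ.filter fun p : Fin n × Fin n => p.1 < p.2 ∧ x p.1 ≠ x p.2).card)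
        {X : Matrix (Fin n) (Fin n) ℝ |
          ∃ U : Matrix (Fin n) (Fin n) ℝ, Uᵀ * U = 1 ∧ X = Uᵀ * Matrix.diagonal x * U} X :=
  eigenvalue_fiber_is_manifold_general n x
end

section
/- Let X ∈ Sⁿ be a symmetric matrix with x := λ(X), and let 𝒱 ⊂ ℝⁿ be an affine subspace containing x that is invariant under the action of the stabilizer Fix(x). Then the set {Uᵀ Diag(v) U : v ∈ 𝒱, U ∈ O(n), Uᵀ Diag(x) U = X} is an affine subspace of Sⁿ. -/
/-!
Conjugating by `U₀` and writing `L` for the direction of `V`, the set in question becomes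
`Diag(x) + {Qᵀ Diag(w) Q : w ∈ L, Q orthogonal, Q Diag(x) = Diag(x) Q}`, and a matrix commutes
with `Diag(x)` exactly when it is block diagonal along the fibres of `x`. This set is cut out by
linear conditions: `N` is symmetric and block diagonal, scalar on every fibre on which all vectors
of `L` are constant, and its traces over the fibres are the fibre sums of some `w ∈ L`.
Conversely, the spectral theorem on each block writes such an `N` as `Qᵀ Diag(u) Q`; then `u - w`
has zero fibre sums and vanishes on the fibres where `L` is constant, so it lies in `L`: the
invariance of `L` under the permutations fixing `x` puts `e_p - e_q` into `L` whenever `p` and `q`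
lie in a fibre on which some vector of `L` is not constant.
-/

open Matrix Finset

namespace Matrix

variable {ι : Type*} [Fintype ι]

theorem transpose_mul_mul_mul {R : Type*} [CommRing R] (A B D : Matrix ι ι R) :
    (A * B)ᵀ * D * (A * B) = Bᵀ * (Aᵀ * D * A) * B := by
  simp only [transpose_mul, mul_assoc]

variable [DecidableEq ι]

theorem commute_diagonal_iff {K : Type*} [Field K] (x : ι → K) (M : Matrix ι ι K) :
    Commute (diagonal x) M ↔ ∀ a b, x a ≠ x b → M a b = 0 := by
  simp only [commute_iff_eq, ← Matrix.ext_iff, diagonal_mul, mul_diagonal, mul_comm (M _ _),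
    mul_eq_mul_right_iff, or_iff_not_imp_left]

theorem Commute.diagonal_of_factorsThrough {K : Type*} [Field K] {x g : ι → K}
    {M : Matrix ι ι K} (hM : Commute (diagonal x) M) (hg : g.FactorsThrough x) :
    Commute (diagonal g) M := by
  rw [commute_diagonal_iff] at hM ⊢
  exact fun a b hab => hM a b (mt (@hg a b) hab)

section Orthogonal

variable {R : Type*} [CommRing R] {Q : Matrix ι ι R}

theorem mul_transpose_mul_mul_mul_transpose (hQ : Qᵀ * Q = 1) (A : Matrix ι ι R) :
    Q * (Qᵀ * A * Q) * Qᵀ = A := by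
  simp only [← mul_assoc, mul_eq_one_comm.mp hQ, one_mul, mul_assoc _ Q, mul_one]

theorem transpose_mul_mul_mul_transpose_mul (hQ : Qᵀ * Q = 1) (A : Matrix ι ι R) :
    Qᵀ * (Q * A * Qᵀ) * Q = A := by
  simp only [← mul_assoc, hQ, one_mul, mul_assoc _ Qᵀ, mul_one]

theorem transpose_mul_self_mul_eq_one {P : Matrix ι ι R} (hP : Pᵀ * P = 1) (hQ : Qᵀ * Q = 1) :
    (P * Q)ᵀ * (P * Q) = 1 := by
  rw [transpose_mul, mul_assoc, ← mul_assoc Pᵀ, hP, one_mul, hQ]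

theorem transpose_mul_mul_inj (hQ : Qᵀ * Q = 1) {A B : Matrix ι ι R} :
    Qᵀ * A * Q = Qᵀ * B * Q ↔ A = B :=
  ⟨fun h => by rw [← mul_transpose_mul_mul_mul_transpose hQ A, h,
    mul_transpose_mul_mul_mul_transpose hQ B], fun h => by rw [h]⟩

theorem transpose_mul_mul_eq_self_iff_commute (hQ : Qᵀ * Q = 1) (A : Matrix ι ι R) :
    Qᵀ * A * Q = A ↔ Commute A Q := by
  refine ⟨fun h => ?_, fun h => by rw [mul_assoc, h.eq, ← mul_assoc, hQ, one_mul]⟩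
  calc A * Q = Q * (Qᵀ * A * Q) * Qᵀ * Q := by
        rw [mul_transpose_mul_mul_mul_transpose hQ]
    _ = Q * A := by rw [h, mul_assoc, hQ, mul_one]

theorem trace_transpose_mul_mul_mul (hQ : Qᵀ * Q = 1) {P : Matrix ι ι R} (hP : Commute P Q)
    (A : Matrix ι ι R) : trace (Qᵀ * A * Q * P) = trace (A * P) := by
  rw [mul_assoc _ Q, ← hP.eq, ← mul_assoc, trace_mul_comm, ← mul_assoc, ← mul_assoc,
    mul_eq_one_comm.mp hQ, one_mul]

theorem transpose_mul_mul_mul_eq_smul_iff (hQ : Qᵀ * Q = 1) {P : Matrix ι ι R}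
    (hP : Commute P Q) (A : Matrix ι ι R) (c : R) :
    Qᵀ * A * Q * P = c • P ↔ A * P = c • P := by
  have hA : Qᵀ * A * Q * P = Qᵀ * (A * P) * Q := by
    rw [mul_assoc _ Q, ← hP.eq]
    simp only [mul_assoc]
  have hP' : c • P = Qᵀ * (c • P) * Q := by
    rw [Matrix.mul_smul, Matrix.smul_mul, (transpose_mul_mul_eq_self_iff_commute hQ P).mpr hP]
  rw [hA]
  conv_lhs => rw [hP']
  exact transpose_mul_mul_inj hQ

end Orthogonal

theorem IsSymm.exists_orthogonal_diagonalization {N : Matrix ι ι ℝ} (hN : N.IsSymm) :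
    ∃ (Q : Matrix ι ι ℝ) (w : ι → ℝ), Qᵀ * Q = 1 ∧ N = Qᵀ * diagonal w * Q := by
  have hH : N.IsHermitian := isHermitian_iff_isSymm.mpr hN
  refine ⟨star (hH.eigenvectorUnitary : Matrix ι ι ℝ), hH.eigenvalues, ?_, ?_⟩
  · simpa [star_eq_conjTranspose] using Unitary.coe_mul_star_self hH.eigenvectorUnitary
  · simpa [Unitary.conjStarAlgAut_apply, star_eq_conjTranspose] using hH.spectral_theorem

theorem IsSymm.exists_orthogonal_blockDiagonalization {β : Type*} [Fintype β] [DecidableEq β]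
    (x : ι → β) {N : Matrix ι ι ℝ} (hN : N.IsSymm) (hNx : ∀ a b, x a ≠ x b → N a b = 0) :
    ∃ (Q : Matrix ι ι ℝ) (w : ι → ℝ), Qᵀ * Q = 1 ∧ (∀ a b, x a ≠ x b → Q a b = 0) ∧
      N = Qᵀ * diagonal w * Q := by
  let e := (Equiv.sigmaFiberEquiv x).symm
  choose Q w hQ hQN using fun r =>
    (hN.submatrix (Subtype.val : {i // x i = r} → ι)).exists_orthogonal_diagonalization
  have he : ∀ a b (hab : x a = x b), e b = ⟨x a, ⟨b, hab.symm⟩⟩ := fun a b hab =>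
    Sigma.subtype_ext hab.symm rfl
  have hblock : N = (blockDiagonal' fun r => N.submatrix (Subtype.val : {i // x i = r} → ι)
      Subtype.val).submatrix e e := by
    ext a b
    by_cases hab : x a = x b
    · rw [submatrix_apply, he a b hab, he a a rfl, blockDiagonal'_apply_eq]
      rfl
    · simp [e, blockDiagonal'_apply, hab, hNx a b hab]
  refine ⟨(blockDiagonal' Q).submatrix e e, (fun s => w s.1 s.2) ∘ e, ?_, ?_, ?_⟩
  · rw [transpose_submatrix, submatrix_mul_equiv, blockDiagonal'_transpose, ← blockDiagonal'_mul]
    simp only [hQ]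
    exact (congrArg (Matrix.submatrix · e e)
      (blockDiagonal'_one (m' := fun r => {i // x i = r}))).trans (submatrix_one_equiv e)
  · intro a b hab
    simp [e, blockDiagonal'_apply, hab]
  · rw [hblock, ← submatrix_diagonal_equiv,
      transpose_submatrix, submatrix_mul_equiv, submatrix_mul_equiv, blockDiagonal'_transpose,
      ← blockDiagonal'_diagonal, ← blockDiagonal'_mul, ← blockDiagonal'_mul]
    simp only [hQN]

theorem IsSymm.exists_orthogonal_diagonalization_of_commute (x : ι → ℝ) {N : Matrix ι ι ℝ}
    (hN : N.IsSymm) (hNx : Commute (diagonal x) N) :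
    ∃ (Q : Matrix ι ι ℝ) (w : ι → ℝ), Qᵀ * Q = 1 ∧ Commute (diagonal x) Q ∧
      N = Qᵀ * diagonal w * Q := by
  classical
  rw [commute_diagonal_iff] at hNx
  obtain ⟨Q, w, hQ, hQx, hNQ⟩ := hN.exists_orthogonal_blockDiagonalization
    (Set.rangeFactorization x) fun a b hab => hNx a b fun h => hab (Subtype.ext h)
  exact ⟨Q, w, hQ, (commute_diagonal_iff x Q).mpr fun a b hab =>
    hQx a b fun h => hab (congrArg Subtype.val h), hNQ⟩

end Matrix

section FixInvariant

variable {ι β K : Type*} [Field K]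

def IsFixInvariant (L : Submodule K (ι → K)) (x : ι → β) : Prop :=
  ∀ σ : Equiv.Perm ι, x ∘ σ = x → ∀ w ∈ L, w ∘ σ ∈ L

def SeparatesFiber (L : Submodule K (ι → K)) (x : ι → β) (a : ι) : Prop :=
  ∃ w ∈ L, ∃ b c, x b = x a ∧ x c = x a ∧ w b ≠ w c

variable {L : Submodule K (ι → K)} {x : ι → β}

theorem apply_eq_of_not_separatesFiber {a : ι} (ha : ¬SeparatesFiber L x a) {w : ι → K}
    (hw : w ∈ L) {b : ι} (hb : x b = x a) : w b = w a := by
  by_contra hne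
  exact ha ⟨w, hw, b, a, hb, rfl, hne⟩

variable [DecidableEq ι]

theorem single_sub_single_mem_of_apply_ne (hL : IsFixInvariant L x) {w : ι → K} (hw : w ∈ L)
    {p q : ι} (hpq : x p = x q) (hne : w p ≠ w q) : Pi.single p 1 - Pi.single q 1 ∈ L := by
  have hswap : x ∘ Equiv.swap p q = x := by
    funext i
    rcases eq_or_ne i p with rfl | hip
    · simp [hpq]
    rcases eq_or_ne i q with rfl | hiq
    · simp [hpq]
    simp [Equiv.swap_apply_of_ne_of_ne hip hiq]
  have hdiff : w - w ∘ Equiv.swap p q = (w p - w q) • (Pi.single p 1 - Pi.single q 1) := by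
    have hqp : q ≠ p := fun h => hne (h ▸ rfl)
    funext i
    rcases eq_or_ne i p with rfl | hip
    · simp [hqp]
    rcases eq_or_ne i q with rfl | hiq
    · simp [hip]
    simp [Equiv.swap_apply_of_ne_of_ne hip hiq, hip, hiq]
  have := L.smul_mem (w p - w q)⁻¹ (L.sub_mem hw (hL _ hswap w hw))
  rwa [hdiff, smul_smul, inv_mul_cancel₀ (sub_ne_zero.mpr hne), one_smul] at this

theorem single_sub_single_mem (hL : IsFixInvariant L x) {a : ι} (ha : SeparatesFiber L x a)
    {p q : ι} (hp : x p = x a) (hq : x q = x a) : Pi.single p 1 - Pi.single q 1 ∈ L := by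
  obtain ⟨w, hw, b, c, hb, hc, hbc⟩ := ha
  -- as `w b ≠ w c`, every `r` in the fibre has `w r ≠ w c` or `w r ≠ w b`
  have hmem : ∀ r, x r = x a → Pi.single r 1 - Pi.single c 1 ∈ L := by
    intro r hr
    by_cases hrc : w r = w c
    · have hrb := single_sub_single_mem_of_apply_ne hL hw (hr.trans hb.symm) (hrc ▸ hbc.symm)
      have hbc' := single_sub_single_mem_of_apply_ne hL hw (hb.trans hc.symm) hbc
      simpa using L.add_mem hrb hbc'
    · exact single_sub_single_mem_of_apply_ne hL hw (hr.trans hc.symm) hrc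
  simpa using L.sub_mem (hmem p hp) (hmem q hq)

theorem eq_sum_fiber_smul_single_sub_single [Fintype ι] [CharZero K] [DecidableEq β]
    {z : ι → K} (hsum : ∀ a, ∑ b with x b = x a, z b = 0) :
    z = ∑ a, ∑ b with x b = x a, (z a / #{c | x c = x a}) • (Pi.single a 1 - Pi.single b 1) := by
  funext i
  have hcard : ∀ a, x i = x a → #{c | x c = x a} = #{c | x c = x i} := fun a h => by rw [h]
  have hsum' : ∑ a with x i = x a, z a = 0 := by simpa only [eq_comm] using hsum i
  have hpos : (#{c | x c = x i} : K) ≠ 0 :=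
    Nat.cast_ne_zero.mpr (card_ne_zero_of_mem (mem_filter.mpr ⟨mem_univ i, rfl⟩))
  simp only [Finset.sum_apply, Pi.smul_apply, Pi.sub_apply, Pi.single_apply, smul_eq_mul, mul_sub,
    sum_sub_distrib, mul_ite, mul_one, mul_zero, sum_ite_eq, mem_filter, mem_univ, true_and,
    sum_const, sum_ite, smul_ite, smul_zero, sum_ite_eq, if_true, nsmul_eq_mul, add_zero]
  rw [sum_congr rfl fun a ha => by rw [hcard a (mem_filter.mp ha).2], ← sum_div, hsum', zero_div,
    sub_zero, mul_div_cancel₀ _ hpos]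

theorem mem_of_sum_fiber_eq_zero [Fintype ι] [CharZero K] [DecidableEq β]
    (hL : IsFixInvariant L x) {z : ι → K} (hz : ∀ a, ¬SeparatesFiber L x a → z a = 0)
    (hsum : ∀ a, ∑ b with x b = x a, z b = 0) : z ∈ L := by
  rw [eq_sum_fiber_smul_single_sub_single hsum]
  refine L.sum_mem fun a _ => L.sum_mem fun b hb => ?_
  by_cases ha : SeparatesFiber L x a
  · exact L.smul_mem _ (single_sub_single_mem hL ha rfl (mem_filter.mp hb).2)
  · simp [hz a ha]

end FixInvariant

namespace Matrix

variable {ι : Type*} [Fintype ι] [DecidableEq ι] {x : ι → ℝ}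

noncomputable def fiberProj (x : ι → ℝ) (a : ι) : Matrix ι ι ℝ :=
  diagonal fun b => if x b = x a then 1 else 0

theorem Commute.fiberProj {Q : Matrix ι ι ℝ} (hQ : Commute (diagonal x) Q) (a : ι) :
    Commute (fiberProj x a) Q :=
  hQ.diagonal_of_factorsThrough fun b c hbc => by simp only [hbc]

theorem diagonal_mul_fiberProj_eq_smul_iff (u : ι → ℝ) (a : ι) (c : ℝ) :
    diagonal u * fiberProj x a = c • fiberProj x a ↔ ∀ b, x b = x a → u b = c := by
  simp only [fiberProj, diagonal_mul_diagonal, ← diagonal_smul, diagonal_eq_diagonal_iff,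
    Pi.smul_apply, smul_eq_mul]
  refine forall_congr' fun b => ?_
  split_ifs <;> simp [*]

theorem trace_diagonal_mul_fiberProj (u : ι → ℝ) (a : ι) :
    trace (diagonal u * fiberProj x a) = ∑ b with x b = x a, u b := by
  simp [fiberProj, trace_diagonal, sum_filter]

theorem trace_fiberProj_ne_zero (a : ι) : trace (fiberProj x a) ≠ 0 := by
  simp [fiberProj, trace_diagonal]

/-- The linear description of `{Qᵀ Diag(w) Q : w ∈ L, Q orthogonal, Commute (Diag x) Q}`
(`mem_spectralSubmodule_iff`). -/
noncomputable def spectralSubmodule (x : ι → ℝ) (L : Submodule ℝ (ι → ℝ)) :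
    Submodule ℝ (Matrix ι ι ℝ) where
  carrier := {N | N.IsSymm ∧ Commute (diagonal x) N ∧
    (∀ a, ¬SeparatesFiber L x a → ∃ c : ℝ, N * fiberProj x a = c • fiberProj x a) ∧
    ∃ w ∈ L, ∀ a, trace (N * fiberProj x a) = trace (diagonal w * fiberProj x a)}
  add_mem' := by
    rintro M N ⟨hM, hMx, hMc, v, hv, hMv⟩ ⟨hN, hNx, hNc, w, hw, hNw⟩
    refine ⟨hM.add hN, hMx.add_right hNx, fun a ha => ?_, v + w, L.add_mem hv hw, fun a => ?_⟩
    · obtain ⟨c, hc⟩ := hMc a ha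
      obtain ⟨d, hd⟩ := hNc a ha
      exact ⟨c + d, by rw [add_mul, hc, hd, add_smul]⟩
    · rw [add_mul, trace_add, hMv, hNw, ← trace_add, ← add_mul, diagonal_add]
      rfl
  zero_mem' := ⟨isSymm_zero, Commute.zero_right _, fun _ _ => ⟨0, by simp⟩, 0, L.zero_mem,
    fun _ => by simp⟩
  smul_mem' := by
    rintro t N ⟨hN, hNx, hNc, w, hw, hNw⟩
    refine ⟨hN.smul t, hNx.smul_right t, fun a ha => ?_, t • w, L.smul_mem t hw, fun a => ?_⟩
    · obtain ⟨c, hc⟩ := hNc a ha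
      exact ⟨t * c, by rw [Matrix.smul_mul, hc, smul_smul]⟩
    · rw [Matrix.smul_mul, trace_smul, hNw, diagonal_smul, Matrix.smul_mul, trace_smul]

theorem transpose_mul_diagonal_mul_mem_spectralSubmodule {L : Submodule ℝ (ι → ℝ)}
    {w : ι → ℝ} (hw : w ∈ L) {Q : Matrix ι ι ℝ} (hQ : Qᵀ * Q = 1)
    (hQx : Commute (diagonal x) Q) : Qᵀ * diagonal w * Q ∈ spectralSubmodule x L := by
  have hQxt : Commute (diagonal x) Qᵀ := by
    change diagonal x * Qᵀ = Qᵀ * diagonal x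
    simpa using congrArg transpose hQx.eq.symm
  refine ⟨?_, (hQxt.mul_right (commute_diagonal x w)).mul_right hQx, fun a ha => ⟨w a, ?_⟩,
    w, hw, fun a => trace_transpose_mul_mul_mul hQ (hQx.fiberProj a) _⟩
  · simp [IsSymm, transpose_mul, mul_assoc]
  · rw [transpose_mul_mul_mul_eq_smul_iff hQ (hQx.fiberProj a), diagonal_mul_fiberProj_eq_smul_iff]
    exact fun b hb => apply_eq_of_not_separatesFiber ha hw hb

theorem mem_spectralSubmodule_iff {L : Submodule ℝ (ι → ℝ)} (hL : IsFixInvariant L x)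
    (N : Matrix ι ι ℝ) : N ∈ spectralSubmodule x L ↔
      ∃ w ∈ L, ∃ Q : Matrix ι ι ℝ, Qᵀ * Q = 1 ∧ Commute (diagonal x) Q ∧
        N = Qᵀ * diagonal w * Q := by
  refine ⟨fun ⟨hN, hNx, hNc, w, hw, hNw⟩ => ?_, fun ⟨w, hw, Q, hQ, hQx, hN⟩ =>
    hN ▸ transpose_mul_diagonal_mul_mem_spectralSubmodule hw hQ hQx⟩
  obtain ⟨Q, u, hQ, hQx, rfl⟩ := hN.exists_orthogonal_diagonalization_of_commute x hNx
  refine ⟨u, ?_, Q, hQ, hQx, rfl⟩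
  have hsum : ∀ a, ∑ b with x b = x a, (u - w) b = 0 := by
    intro a
    rw [sum_congr rfl fun b _ => Pi.sub_apply u w b, sum_sub_distrib,
      ← trace_diagonal_mul_fiberProj, ← trace_diagonal_mul_fiberProj,
      ← trace_transpose_mul_mul_mul hQ (hQx.fiberProj a), hNw, sub_self]
  have hzero : ∀ a, ¬SeparatesFiber L x a → (u - w) a = 0 := by
    intro a ha
    obtain ⟨c, hc⟩ := hNc a ha
    have hu := (diagonal_mul_fiberProj_eq_smul_iff u a c).mp
      ((transpose_mul_mul_mul_eq_smul_iff hQ (hQx.fiberProj a) _ c).mp hc) a rfl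
    have hwa : diagonal w * fiberProj x a = w a • fiberProj x a :=
      (diagonal_mul_fiberProj_eq_smul_iff w a _).mpr fun b hb =>
        apply_eq_of_not_separatesFiber ha hw hb
    have hcw : c = w a := by
      have := hNw a
      rw [hc, hwa, trace_smul, trace_smul, smul_eq_mul, smul_eq_mul] at this
      exact mul_right_cancel₀ (trace_fiberProj_ne_zero a) this
    rw [Pi.sub_apply, hu, hcw, sub_self]
  simpa using L.add_mem (mem_of_sum_fiber_eq_zero hL hzero hsum) hw

end Matrix

theorem AffineSubspace.linear_mem_direction_of_image_eq {k V P : Type*} [Ring k]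
    [AddCommGroup V] [Module k V] [AddTorsor V P] {s : AffineSubspace k P} {f : P →ᵃ[k] P}
    (hf : f '' s = s) {w : V} (hw : w ∈ s.direction) : f.linear w ∈ s.direction := by
  have hs : s.map f = s := SetLike.coe_injective (by rw [AffineSubspace.coe_map, hf])
  rw [← hs, AffineSubspace.map_direction]
  exact Submodule.mem_map_of_mem hw

theorem isFixInvariant_direction {ι : Type*} {x : ι → ℝ} {V : AffineSubspace ℝ (ι → ℝ)}
    (hV : ∀ σ : Equiv.Perm ι, x ∘ σ = x →
      (fun v : ι → ℝ => v ∘ σ) '' (V : Set (ι → ℝ)) = (V : Set (ι → ℝ))) :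
    IsFixInvariant V.direction x := fun σ hσ _ hw =>
  AffineSubspace.linear_mem_direction_of_image_eq
    (f := (LinearMap.funLeft ℝ ℝ σ).toAffineMap) (hV σ hσ) hw

/-- The change of variables `U = Q * U₀`. -/
theorem exists_orthogonal_conj_iff {ι : Type*} [Fintype ι] [DecidableEq ι] {x : ι → ℝ}
    {U₀ X M : Matrix ι ι ℝ} {V : AffineSubspace ℝ (ι → ℝ)} (hU₀ : U₀ᵀ * U₀ = 1)
    (hX : X = U₀ᵀ * diagonal x * U₀) (hxV : x ∈ V) :
    (∃ w ∈ V.direction, ∃ Q : Matrix ι ι ℝ, Qᵀ * Q = 1 ∧ Commute (diagonal x) Q ∧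
        U₀ * (M - X) * U₀ᵀ = Qᵀ * diagonal w * Q) ↔
      ∃ (v : ι → ℝ) (U : Matrix ι ι ℝ), v ∈ V ∧ Uᵀ * U = 1 ∧ X = Uᵀ * diagonal x * U ∧
        M = Uᵀ * diagonal v * U := by
  constructor
  · rintro ⟨w, hw, Q, hQ, hQx, hM⟩
    have hQD := (transpose_mul_mul_eq_self_iff_commute hQ _).mpr hQx
    refine ⟨w + x, Q * U₀, AffineSubspace.vadd_mem_of_mem_direction hw hxV,
      transpose_mul_self_mul_eq_one hQ hU₀, by rw [transpose_mul_mul_mul, hQD, hX], ?_⟩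
    calc M = U₀ᵀ * (U₀ * (M - X) * U₀ᵀ) * U₀ + X := by
          rw [transpose_mul_mul_mul_transpose_mul hU₀, sub_add_cancel]
      _ = U₀ᵀ * (Qᵀ * (diagonal w + diagonal x) * Q) * U₀ := by
          rw [hM, mul_add, add_mul, hQD, mul_add, add_mul, hX]
      _ = (Q * U₀)ᵀ * diagonal (w + x) * (Q * U₀) := by
          rw [transpose_mul_mul_mul, diagonal_add]
          rfl
  · rintro ⟨v, U, hv, hU, hXU, rfl⟩
    have hU₀t : U₀ᵀᵀ * U₀ᵀ = 1 := by rw [transpose_transpose, mul_eq_one_comm.mp hU₀]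
    have hQ := transpose_mul_self_mul_eq_one hU hU₀t
    have hQD : (U * U₀ᵀ)ᵀ * diagonal x * (U * U₀ᵀ) = diagonal x := by
      rw [transpose_mul_mul_mul, ← hXU, hX, transpose_transpose,
        mul_transpose_mul_mul_mul_transpose hU₀]
    refine ⟨v - x, AffineSubspace.vsub_mem_direction hv hxV, U * U₀ᵀ, hQ,
      (transpose_mul_mul_eq_self_iff_commute hQ _).mp hQD, ?_⟩
    calc U₀ * (Uᵀ * diagonal v * U - X) * U₀ᵀ
        = (U * U₀ᵀ)ᵀ * diagonal v * (U * U₀ᵀ) - U₀ * X * U₀ᵀ := by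
          rw [mul_sub, sub_mul, transpose_mul_mul_mul, transpose_transpose]
      _ = (U * U₀ᵀ)ᵀ * (diagonal v - diagonal x) * (U * U₀ᵀ) := by
          rw [mul_sub, sub_mul, hQD, hX, mul_transpose_mul_mul_mul_transpose hU₀]
      _ = (U * U₀ᵀ)ᵀ * diagonal (v - x) * (U * U₀ᵀ) := by
          rw [diagonal_sub]
          rfl

theorem affine_generation_general (n : ℕ) (X : Matrix (Fin n) (Fin n) ℝ) (x : Fin n → ℝ)
    (U₀ : Matrix (Fin n) (Fin n) ℝ) (hU₀ : U₀ᵀ * U₀ = 1)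
    (hX : X = U₀ᵀ * Matrix.diagonal x * U₀)
    (V : AffineSubspace ℝ (Fin n → ℝ)) (hxV : x ∈ V)
    (hVinv : ∀ σ : Equiv.Perm (Fin n), x ∘ σ = x →
      (fun v : Fin n → ℝ => v ∘ σ) '' (V : Set (Fin n → ℝ)) = (V : Set (Fin n → ℝ))) :
    ∃ W : AffineSubspace ℝ (Matrix (Fin n) (Fin n) ℝ),
      (W : Set (Matrix (Fin n) (Fin n) ℝ)) =
        {M | ∃ (v : Fin n → ℝ) (U : Matrix (Fin n) (Fin n) ℝ),
          v ∈ V ∧ Uᵀ * U = 1 ∧ X = Uᵀ * Matrix.diagonal x * U ∧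
          M = Uᵀ * Matrix.diagonal v * U} := by
  refine ⟨AffineSubspace.mk' X ((spectralSubmodule x V.direction).comap
    (LinearMap.mulLeftRight ℝ (U₀, U₀ᵀ))), ?_⟩
  ext M
  rw [SetLike.mem_coe, AffineSubspace.mem_mk', Submodule.mem_comap, LinearMap.mulLeftRight_apply,
    vsub_eq_sub, mem_spectralSubmodule_iff (isFixInvariant_direction hVinv)]
  exact exists_orthogonal_conj_iff hU₀ hX hxV

/-- Affine generation: if `𝒱 ⊂ ℝⁿ` is an affine subspace containing the nonincreasing
eigenvalue vector `x = λ(X)` of the symmetric matrix `X` and invariant under all coordinate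
permutations fixing `x`, then `{Uᵀ Diag(v) U : v ∈ 𝒱, U ∈ Oⁿ_X}` is an affine subspace of
the symmetric matrices. -/
theorem affine_generation (n : ℕ) (X : Matrix (Fin n) (Fin n) ℝ) (x : Fin n → ℝ)
    (hx : Antitone x)
    (U₀ : Matrix (Fin n) (Fin n) ℝ) (hU₀ : U₀ᵀ * U₀ = 1)
    (hX : X = U₀ᵀ * Matrix.diagonal x * U₀)
    (V : AffineSubspace ℝ (Fin n → ℝ)) (hxV : x ∈ V)
    (hVinv : ∀ σ : Equiv.Perm (Fin n), x ∘ σ = x →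
      (fun v : Fin n → ℝ => v ∘ σ) '' (V : Set (Fin n → ℝ)) = (V : Set (Fin n → ℝ))) :
    ∃ W : AffineSubspace ℝ (Matrix (Fin n) (Fin n) ℝ),
      (W : Set (Matrix (Fin n) (Fin n) ℝ)) =
        {M | ∃ (v : Fin n → ℝ) (U : Matrix (Fin n) (Fin n) ℝ),
          v ∈ V ∧ Uᵀ * U = 1 ∧ X = Uᵀ * Matrix.diagonal x * U ∧
          M = Uᵀ * Matrix.diagonal v * U} :=
  affine_generation_general n X x U₀ hU₀ hX V hxV hVinv
end

section
/- Let M ⊂ ℝⁿ be a path-connected set such that for every permutation σ of coordinates, either σM = M or σM ∩ M = ∅. Then the spectral lift λ⁻¹(M^sym) of the symmetrization M^sym := ⋃_σ σM is a path-connected subset of the symmetric matrices Sⁿ. -/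
/-! Every point of the lift has the form `Uᵀ diag(x) U` with `U` orthogonal and `x ∘ σ ∈ M`.
By Cartan–Dieudonné, `U` is a product of reflections `R_v` in hyperplanes `v⊥`. For `n ≥ 2` the
nonzero vectors form a path-connected set on which `v ↦ R_v` is continuous, so each factor is joined
to the reflection `R_e` with `e` a standard basis vector, and `U` is joined inside `O(n)` to a power
of `R_e`, which is diagonal and therefore fixes `diag(x)` under conjugation. Conjugating along that
path joins `Uᵀ diag(x) U` to `diag(x)`; a permutation matrix joins `diag(x)` to `diag(x ∘ σ)` in the
same way, and a path in `M` from `x ∘ σ` to a base point completes the argument. -/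

open Matrix

attribute [local instance] Matrix.normedAddCommGroup Matrix.normedSpace

theorem Submodule.coe_reflection_mem_unitary {𝕜 E : Type*} [RCLike 𝕜] [NormedAddCommGroup E]
    [InnerProductSpace 𝕜 E] [CompleteSpace E] (K : Submodule 𝕜 E) [K.HasOrthogonalProjection] :
    (K.reflection : E →L[𝕜] E) ∈ unitary (E →L[𝕜] E) :=
  (Unitary.linearIsometryEquiv.symm K.reflection).property

theorem JoinedIn.submonoid_mul {M : Type*} [Monoid M] [TopologicalSpace M] [ContinuousMul M]
    {S : Submonoid M} {a b c d : M} (hab : JoinedIn S a b) (hcd : JoinedIn S c d) :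
    JoinedIn S (a * c) (b * d) :=
  (hab.mul hcd).mono S.coe_mul_self_eq.subset

section

open InnerProductSpace

variable {F : Type*} [NormedAddCommGroup F] [InnerProductSpace ℝ F]

theorem Submodule.coe_reflection_orthogonal_span_singleton (v : F) :
    ((ℝ ∙ v)ᗮ.reflection : F →L[ℝ] F) = 1 - (2 / ‖v‖ ^ 2) • rankOne ℝ v v := by
  ext x
  simp only [ContinuousLinearEquiv.coe_coe, LinearIsometryEquiv.coe_toContinuousLinearEquiv]
  rw [Submodule.reflection_orthogonal_apply, Submodule.reflection_apply,
    Submodule.starProjection_singleton]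
  simp only [Real.ringHom_apply, neg_sub, _root_.sub_apply, one_apply_eq_self,
    _root_.smul_apply, rankOne_apply, sub_right_inj]
  module

variable [FiniteDimensional ℝ F]

theorem continuousOn_reflection_orthogonal_span_singleton :
    ContinuousOn (fun v : F => ((ℝ ∙ v)ᗮ.reflection : F →L[ℝ] F)) {0}ᶜ := by
  simp_rw [Submodule.coe_reflection_orthogonal_span_singleton]
  have hrank : Continuous fun v : F => rankOne ℝ v v :=
    continuous_clm_apply.2 fun y => by simp only [rankOne_apply]; fun_prop
  have hcoef : ContinuousOn (fun v : F => 2 / ‖v‖ ^ 2) {0}ᶜ :=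
    continuousOn_const.div (by fun_prop) fun v hv => by simpa using hv
  exact continuousOn_const.sub (hcoef.smul hrank.continuousOn)

theorem joinedIn_unitary_reflection (h : 1 < Module.rank ℝ F) {v w : F} (hv : v ≠ 0) (hw : w ≠ 0) :
    JoinedIn (unitary (F →L[ℝ] F)) ((ℝ ∙ v)ᗮ.reflection : F →L[ℝ] F) ((ℝ ∙ w)ᗮ.reflection) := by
  have hvw := (isPathConnected_compl_singleton_of_one_lt_rank h 0).joinedIn v hv w hw
  refine (hvw.map_continuousOn continuousOn_reflection_orthogonal_span_singleton).mono ?_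
  rintro _ ⟨u, -, rfl⟩
  exact Submodule.coe_reflection_mem_unitary _

theorem joinedIn_unitary_prod_reflection (h : 1 < Module.rank ℝ F) {e : F} (he : e ≠ 0)
    (l : List F) : ∃ k : ℕ, JoinedIn (unitary (F →L[ℝ] F))
      (l.map fun v => ((ℝ ∙ v)ᗮ.reflection : F →L[ℝ] F)).prod
      (((ℝ ∙ e)ᗮ.reflection : F →L[ℝ] F) ^ k) := by
  induction l with
  | nil => exact ⟨0, JoinedIn.refl (one_mem _)⟩
  | cons v l ih =>
    obtain ⟨k, hk⟩ := ih
    rw [List.map_cons, List.prod_cons]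
    rcases eq_or_ne v 0 with rfl | hv
    · have hzero : ((ℝ ∙ (0 : F))ᗮ.reflection : F →L[ℝ] F) = 1 := by
        rw [Submodule.coe_reflection_orthogonal_span_singleton]; simp
      exact ⟨k, by rwa [hzero, one_mul]⟩
    · refine ⟨k + 1, ?_⟩
      rw [pow_succ']
      exact (joinedIn_unitary_reflection h hv he).submonoid_mul hk

theorem exists_joinedIn_unitary_pow_reflection (h : 1 < Module.rank ℝ F) {e : F} (he : e ≠ 0)
    {u : F →L[ℝ] F} (hu : u ∈ unitary (F →L[ℝ] F)) :
    ∃ k : ℕ, JoinedIn (unitary (F →L[ℝ] F)) u (((ℝ ∙ e)ᗮ.reflection : F →L[ℝ] F) ^ k) := by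
  obtain ⟨l, -, hl⟩ := (Unitary.linearIsometryEquiv ⟨u, hu⟩).reflections_generate_dim
  have hu_prod : u = (l.map fun v => ((ℝ ∙ v)ᗮ.reflection : F →L[ℝ] F)).prod := by
    simpa [map_list_prod, List.map_map, Function.comp_def] using
      congrArg (fun φ => (Unitary.linearIsometryEquiv.symm φ : F →L[ℝ] F)) hl
  exact hu_prod ▸ joinedIn_unitary_prod_reflection h he l

end

namespace Matrix

variable {ι : Type*} [Fintype ι] [DecidableEq ι]

theorem toEuclideanCLM_diagonal_update_one_neg_one (i : ι) :
    toEuclideanCLM (𝕜 := ℝ) (diagonal (Function.update 1 i (-1))) =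
      ((ℝ ∙ EuclideanSpace.single i (1 : ℝ))ᗮ.reflection : _ →L[ℝ] _) := by
  ext x j
  simp only [ContinuousLinearEquiv.coe_coe, LinearIsometryEquiv.coe_toContinuousLinearEquiv]
  rw [Submodule.reflection_orthogonal_apply, Submodule.reflection_apply,
    Submodule.starProjection_singleton]
  by_cases hj : j = i
  · subst hj
    simp only [ofLp_toEuclideanCLM, mulVec_diagonal, Function.update_self, neg_mul, one_mul,
      EuclideanSpace.inner_single_left, Real.ringHom_apply, PiLp.norm_single, norm_one, one_pow,
      div_one, neg_sub, PiLp.sub_apply, PiLp.smul_apply, PiLp.single_eq_same, smul_eq_mul, mul_one,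
      nsmul_eq_mul, Nat.cast_ofNat]
    ring
  · simp [hj, mulVec_diagonal, EuclideanSpace.inner_single_left]

theorem joinedIn_unitaryGroup_of_toEuclideanCLM {𝕜 : Type*} [RCLike 𝕜] {U V : Matrix ι ι 𝕜}
    (h : JoinedIn (unitary (EuclideanSpace 𝕜 ι →L[𝕜] EuclideanSpace 𝕜 ι))
      (toEuclideanCLM (𝕜 := 𝕜) U) (toEuclideanCLM (𝕜 := 𝕜) V)) :
    JoinedIn (unitaryGroup ι 𝕜) U V := by
  let T := toEuclideanCLM (n := ι) (𝕜 := 𝕜)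
  have hT : Continuous T.symm :=
    LinearMap.continuous_of_finiteDimensional T.symm.toAlgEquiv.toLinearMap
  have hpath := h.map hT
  rw [T.symm_apply_apply, T.symm_apply_apply] at hpath
  refine hpath.mono ?_
  rintro _ ⟨W, hW, rfl⟩
  exact Unitary.map_mem (R := EuclideanSpace 𝕜 ι →L[𝕜] EuclideanSpace 𝕜 ι) (S := Matrix ι ι 𝕜)
    T.symm hW

theorem exists_joinedIn_orthogonalGroup_diagonal {U : Matrix ι ι ℝ} (hU : U ∈ orthogonalGroup ι ℝ) :
    ∃ d : ι → ℝ, JoinedIn (orthogonalGroup ι ℝ) U (diagonal d) := by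
  rcases subsingleton_or_nontrivial ι with hι | hι
  · exact ⟨diag U, (isDiag_of_subsingleton U).diagonal_diag.symm ▸ JoinedIn.refl hU⟩
  obtain ⟨i⟩ : Nonempty ι := inferInstance
  have hrank : 1 < Module.rank ℝ (EuclideanSpace ℝ ι) := by
    rw [← Module.finrank_eq_rank, finrank_euclideanSpace]
    exact_mod_cast Fintype.one_lt_card
  have he : EuclideanSpace.single i (1 : ℝ) ≠ 0 := by simp
  obtain ⟨k, hk⟩ := exists_joinedIn_unitary_pow_reflection hrank he
    (Unitary.map_mem (toEuclideanCLM (n := ι) (𝕜 := ℝ)) hU)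
  rw [← toEuclideanCLM_diagonal_update_one_neg_one, ← map_pow, diagonal_pow] at hk
  exact ⟨_, joinedIn_unitaryGroup_of_toEuclideanCLM hk⟩

theorem permMatrix_mem_orthogonalGroup {R : Type*} [CommRing R] (σ : Equiv.Perm ι) :
    σ.permMatrix R ∈ orthogonalGroup ι R := by
  rw [mem_orthogonalGroup_iff', transpose_permMatrix, ← permMatrix_mul, mul_inv_cancel,
    permMatrix_one]

theorem transpose_permMatrix_mul_diagonal_mul_permMatrix {R : Type*} [CommRing R]
    (σ : Equiv.Perm ι) (x : ι → R) :
    (σ.permMatrix R)ᵀ * diagonal x * σ.permMatrix R = diagonal (x ∘ σ.symm) := by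
  rw [transpose_permMatrix]
  simp [Equiv.Perm.permMatrix, PEquiv.toMatrix_toPEquiv_mul, PEquiv.mul_toMatrix_toPEquiv,
    submatrix_diagonal_equiv]

theorem transpose_mul_diagonal_mul_of_diagonal_mem_orthogonalGroup {R : Type*} [CommRing R]
    {d : ι → R} (hd : diagonal d ∈ orthogonalGroup ι R) (x : ι → R) :
    (diagonal d)ᵀ * diagonal x * diagonal d = diagonal x := by
  rw [mul_assoc, ← (commute_diagonal d x).eq, ← mul_assoc, (mem_orthogonalGroup_iff' ι R).1 hd,
    one_mul]

def orthogonalOrbit (x : ι → ℝ) : Set (Matrix ι ι ℝ) :=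
  (fun U => Uᵀ * diagonal x * U) '' orthogonalGroup ι ℝ

theorem diagonal_mem_orthogonalOrbit (x : ι → ℝ) : diagonal x ∈ orthogonalOrbit x :=
  ⟨1, one_mem _, by simp⟩

theorem joinedIn_orthogonalOrbit (x : ι → ℝ) {U : Matrix ι ι ℝ} (hU : U ∈ orthogonalGroup ι ℝ) :
    JoinedIn (orthogonalOrbit x) (Uᵀ * diagonal x * U) (diagonal x) := by
  obtain ⟨d, hd⟩ := exists_joinedIn_orthogonalGroup_diagonal hU
  have hconj : Continuous fun V : Matrix ι ι ℝ => Vᵀ * diagonal x * V := by fun_prop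
  have hpath := hd.map hconj
  rwa [transpose_mul_diagonal_mul_of_diagonal_mem_orthogonalGroup hd.target_mem] at hpath

theorem joinedIn_orthogonalOrbit_diagonal_comp (x : ι → ℝ) (σ : Equiv.Perm ι) :
    JoinedIn (orthogonalOrbit x) (diagonal x) (diagonal (x ∘ σ)) := by
  have hpath := joinedIn_orthogonalOrbit x (permMatrix_mem_orthogonalGroup σ⁻¹)
  rw [transpose_permMatrix_mul_diagonal_mul_permMatrix] at hpath
  exact hpath.symm

end Matrix

theorem path_connected_lift_general (n : ℕ) (M : Set (Fin n → ℝ)) (hM : IsPathConnected M) :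
    IsPathConnected {X : Matrix (Fin n) (Fin n) ℝ |
      ∃ (x : Fin n → ℝ) (U : Matrix (Fin n) (Fin n) ℝ),
        (∃ σ : Equiv.Perm (Fin n), x ∘ σ ∈ M) ∧
        Uᵀ * U = 1 ∧ X = Uᵀ * Matrix.diagonal x * U} := by
  set S := {X : Matrix (Fin n) (Fin n) ℝ | ∃ (x : Fin n → ℝ) (U : Matrix (Fin n) (Fin n) ℝ),
    (∃ σ : Equiv.Perm (Fin n), x ∘ σ ∈ M) ∧ Uᵀ * U = 1 ∧ X = Uᵀ * diagonal x * U}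
  have horbit : ∀ x, (∃ σ : Equiv.Perm (Fin n), x ∘ σ ∈ M) → orthogonalOrbit x ⊆ S := by
    rintro x hx _ ⟨U, hU, rfl⟩
    exact ⟨x, U, hx, (mem_orthogonalGroup_iff' _ ℝ).1 hU, rfl⟩
  have hdiag : diagonal '' M ⊆ S := by
    rintro _ ⟨y, hy, rfl⟩
    exact horbit y ⟨1, hy⟩ (diagonal_mem_orthogonalOrbit y)
  obtain ⟨y, hy⟩ := hM.nonempty
  refine ⟨diagonal y, hdiag ⟨y, hy, rfl⟩, ?_⟩
  rintro _ ⟨x, U, ⟨σ, hxσ⟩, hU, rfl⟩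
  have hconj := joinedIn_orthogonalOrbit x ((mem_orthogonalGroup_iff' _ ℝ).2 hU)
  have hperm := joinedIn_orthogonalOrbit_diagonal_comp x σ
  have hpath := (hM.joinedIn _ hxσ _ hy).map continuous_id.matrix_diagonal
  exact (((hconj.trans hperm).mono (horbit x ⟨σ, hxσ⟩)).trans (hpath.mono hdiag)).symm

/-- Path-connected lifts: if `M ⊂ ℝⁿ` is path-connected and every coordinate permutation
either preserves `M` or moves it off itself, then the spectral lift `λ⁻¹(M^sym)` of the
symmetrization `M^sym = ⋃_σ σM` is a path-connected set of symmetric matrices. -/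
theorem path_connected_lift (n : ℕ) (M : Set (Fin n → ℝ)) (hM : IsPathConnected M)
    (hperm : ∀ σ : Equiv.Perm (Fin n),
      (fun x : Fin n → ℝ => x ∘ σ) '' M = M ∨
      Disjoint ((fun x : Fin n → ℝ => x ∘ σ) '' M) M) :
    IsPathConnected {X : Matrix (Fin n) (Fin n) ℝ |
      ∃ (x : Fin n → ℝ) (U : Matrix (Fin n) (Fin n) ℝ),
        (∃ σ : Equiv.Perm (Fin n), x ∘ σ ∈ M) ∧
        Uᵀ * U = 1 ∧ X = Uᵀ * Matrix.diagonal x * U} :=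
  path_connected_lift_general n M hM
end

section
/- Let f : ℝⁿ → ℝ ∪ {+∞} be locally symmetric around x̄ = λ(X̄) for a symmetric matrix X̄ ∈ Sⁿ, and let M ⊂ ℝⁿ be locally symmetric around x̄ with x̄ ∈ M. If the restriction of f to M is C^p-smooth around x̄ (admits a local C^p extension to ℝⁿ), then there exists a C^p-smooth function agreeing with f on M near x̄ that is additionally invariant under all permutations in Fix(x̄); namely the symmetrization g(x) := (1/|Fix(x̄)|) Σ_{σ ∈ Fix(x̄)} f̃(σx) of any local C^p extension f̃ has these properties. -/
/-!
Each term `x ↦ f̃ (x ∘ σ)` of the average is `f̃` composed with a linear coordinate permutation, so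
the average is `C^p`; left multiplication by `τ ∈ Fix(x̄)` permutes `Fix(x̄)`, so the average is
`Fix(x̄)`-invariant. For `x ∈ M` near `x̄` and `σ ∈ Fix(x̄)`, the point `x ∘ σ` is again in `M` and
as close to `x̄ = x̄ ∘ σ` as `x` is, so `f̃ (x ∘ σ) = f (x ∘ σ) = f x = f̃ x`: every term of the
average equals `f x`.
-/

theorem Pi.dist_comp_equiv {ι ι' E : Type*} [Fintype ι] [Fintype ι'] [PseudoMetricSpace E]
    (x y : ι → E) (e : ι' ≃ ι) : dist (x ∘ e) (y ∘ e) = dist x y :=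
  (IsometryEquiv.piCongrLeft (Y := fun _ => E) e).symm.dist_eq x y

theorem contDiff_comp_equiv {𝕜 ι ι' E : Type*} [NontriviallyNormedField 𝕜] [NormedAddCommGroup E]
    [NormedSpace 𝕜 E] [Fintype ι] [Fintype ι'] {p : WithTop ℕ∞} (e : ι' ≃ ι) :
    ContDiff 𝕜 p fun x : ι → E => x ∘ e :=
  contDiff_pi.2 fun i => contDiff_apply 𝕜 E (e i)

section PermAverage

variable {ι α : Type*} (S : Finset (Equiv.Perm ι)) (F : (ι → α) → ℝ)

noncomputable def permAverage (x : ι → α) : ℝ :=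
  (S.card : ℝ)⁻¹ * ∑ σ ∈ S, F (x ∘ σ)

theorem ContDiff.permAverage [Fintype ι] {E : Type*} [NormedAddCommGroup E] [NormedSpace ℝ E]
    {F : (ι → E) → ℝ} {p : WithTop ℕ∞} (hF : ContDiff ℝ p F) :
    ContDiff ℝ p (permAverage S F) :=
  contDiff_const.mul <| ContDiff.sum fun σ _ => hF.comp (contDiff_comp_equiv σ)

variable {S F}

theorem permAverage_eq_of_forall_mem {x : ι → α} (hS : S.Nonempty)
    (h : ∀ σ ∈ S, F (x ∘ σ) = F x) : permAverage S F x = F x := by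
  have hcard : (S.card : ℝ) ≠ 0 := by exact_mod_cast hS.card_pos.ne'
  rw [permAverage, Finset.sum_congr rfl h, Finset.sum_const, nsmul_eq_mul,
    inv_mul_cancel_left₀ hcard]

theorem permAverage_comp_perm {τ : Equiv.Perm ι} (hS : ∀ σ, σ ∈ S ↔ τ * σ ∈ S) (x : ι → α) :
    permAverage S F (x ∘ τ) = permAverage S F x := by
  unfold permAverage
  congr 1
  exact Finset.sum_equiv (Equiv.mulLeft τ) hS fun _ _ => rfl

end PermAverage

theorem symmetrized_extension_general (n : ℕ) (p : ℕ∞) (f : (Fin n → ℝ) → EReal)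
    (M : Set (Fin n → ℝ)) (x₀ : Fin n → ℝ)
    (hfsym : ∃ ε > (0:ℝ), ∀ σ : Equiv.Perm (Fin n), x₀ ∘ σ = x₀ →
      ∀ x : Fin n → ℝ, ‖x - x₀‖ < ε → f (x ∘ σ) = f x)
    (hMsym : ∃ ε > (0:ℝ), ∀ σ : Equiv.Perm (Fin n), x₀ ∘ σ = x₀ →
      ∀ x : Fin n → ℝ, ‖x - x₀‖ < ε → (x ∈ M ↔ x ∘ σ ∈ M))
    (ftil : (Fin n → ℝ) → ℝ) (hsm : ContDiff ℝ p ftil)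
    (hagree : ∃ δ > (0:ℝ), ∀ x ∈ M, ‖x - x₀‖ < δ → f x = ((ftil x : ℝ) : EReal)) :
    ContDiff ℝ p (fun x : Fin n → ℝ =>
        (((Finset.univ.filter fun σ : Equiv.Perm (Fin n) => x₀ ∘ σ = x₀).card : ℝ))⁻¹ *
          ∑ σ ∈ Finset.univ.filter fun σ : Equiv.Perm (Fin n) => x₀ ∘ σ = x₀, ftil (x ∘ σ)) ∧
    (∃ δ > (0:ℝ), ∀ x ∈ M, ‖x - x₀‖ < δ →
      f x = ((((Finset.univ.filter fun σ : Equiv.Perm (Fin n) => x₀ ∘ σ = x₀).card : ℝ))⁻¹ *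
          ∑ σ ∈ Finset.univ.filter fun σ : Equiv.Perm (Fin n) => x₀ ∘ σ = x₀, ftil (x ∘ σ)
        : ℝ)) ∧
    ∀ τ : Equiv.Perm (Fin n), x₀ ∘ τ = x₀ → ∀ x : Fin n → ℝ,
      (((Finset.univ.filter fun σ : Equiv.Perm (Fin n) => x₀ ∘ σ = x₀).card : ℝ))⁻¹ *
          ∑ σ ∈ Finset.univ.filter fun σ : Equiv.Perm (Fin n) => x₀ ∘ σ = x₀, ftil ((x ∘ τ) ∘ σ)
        = (((Finset.univ.filter fun σ : Equiv.Perm (Fin n) => x₀ ∘ σ = x₀).card : ℝ))⁻¹ *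
          ∑ σ ∈ Finset.univ.filter fun σ : Equiv.Perm (Fin n) => x₀ ∘ σ = x₀, ftil (x ∘ σ) := by
  set S := Finset.univ.filter fun σ : Equiv.Perm (Fin n) => x₀ ∘ σ = x₀
  have mem_S : ∀ σ, σ ∈ S ↔ x₀ ∘ σ = x₀ := by simp [S]
  obtain ⟨ε₁, hε₁, hfs⟩ := hfsym
  obtain ⟨ε₂, hε₂, hMs⟩ := hMsym
  obtain ⟨δ, hδ, hag⟩ := hagree
  refine ⟨hsm.permAverage S, ⟨min ε₁ (min ε₂ δ), by positivity, fun x hxM hx => ?_⟩,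
    fun τ hτ => permAverage_comp_perm fun σ => ?_⟩
  · simp only [lt_min_iff] at hx
    have hterm : ∀ σ ∈ S, ftil (x ∘ σ) = ftil x := fun σ hσ => by
      have hσ : x₀ ∘ σ = x₀ := (mem_S σ).1 hσ
      have hdist : ‖x ∘ σ - x₀‖ = ‖x - x₀‖ := by
        rw [← dist_eq_norm, ← dist_eq_norm, ← Pi.dist_comp_equiv x x₀ σ, hσ]
      have h := hag _ ((hMs σ hσ x hx.2.1).1 hxM) (hdist ▸ hx.2.2)
      exact_mod_cast h.symm.trans ((hfs σ hσ x hx.1).trans (hag x hxM hx.2.2))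
    rw [← permAverage, permAverage_eq_of_forall_mem ⟨1, (mem_S 1).2 rfl⟩ hterm]
    exact hag x hxM hx.2.2
  · rw [mem_S, mem_S, Equiv.Perm.coe_mul, ← Function.comp_assoc, hτ]

/-- Symmetrized smooth extension: if `f` and `M` are locally symmetric at `x̄ ∈ M` and `f̃` is
a local `C^p` extension of `f|_M`, then the symmetrization
`g(x) = |Fix(x̄)|⁻¹ Σ_{σ ∈ Fix(x̄)} f̃(σx)` is `C^p`, agrees with `f` on `M` near `x̄`, and is
invariant under every permutation in `Fix(x̄)`. -/
theorem symmetrized_extension (n : ℕ) (p : ℕ∞) (f : (Fin n → ℝ) → EReal)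
    (M : Set (Fin n → ℝ)) (x₀ : Fin n → ℝ) (hx₀ : x₀ ∈ M)
    (hfsym : ∃ ε > (0:ℝ), ∀ σ : Equiv.Perm (Fin n), x₀ ∘ σ = x₀ →
      ∀ x : Fin n → ℝ, ‖x - x₀‖ < ε → f (x ∘ σ) = f x)
    (hMsym : ∃ ε > (0:ℝ), ∀ σ : Equiv.Perm (Fin n), x₀ ∘ σ = x₀ →
      ∀ x : Fin n → ℝ, ‖x - x₀‖ < ε → (x ∈ M ↔ x ∘ σ ∈ M))
    (ftil : (Fin n → ℝ) → ℝ) (hsm : ContDiff ℝ p ftil)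
    (hagree : ∃ δ > (0:ℝ), ∀ x ∈ M, ‖x - x₀‖ < δ → f x = ((ftil x : ℝ) : EReal)) :
    ContDiff ℝ p (fun x : Fin n → ℝ =>
        (((Finset.univ.filter fun σ : Equiv.Perm (Fin n) => x₀ ∘ σ = x₀).card : ℝ))⁻¹ *
          ∑ σ ∈ Finset.univ.filter fun σ : Equiv.Perm (Fin n) => x₀ ∘ σ = x₀, ftil (x ∘ σ)) ∧
    (∃ δ > (0:ℝ), ∀ x ∈ M, ‖x - x₀‖ < δ →
      f x = ((((Finset.univ.filter fun σ : Equiv.Perm (Fin n) => x₀ ∘ σ = x₀).card : ℝ))⁻¹ *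
          ∑ σ ∈ Finset.univ.filter fun σ : Equiv.Perm (Fin n) => x₀ ∘ σ = x₀, ftil (x ∘ σ)
        : ℝ)) ∧
    ∀ τ : Equiv.Perm (Fin n), x₀ ∘ τ = x₀ → ∀ x : Fin n → ℝ,
      (((Finset.univ.filter fun σ : Equiv.Perm (Fin n) => x₀ ∘ σ = x₀).card : ℝ))⁻¹ *
          ∑ σ ∈ Finset.univ.filter fun σ : Equiv.Perm (Fin n) => x₀ ∘ σ = x₀, ftil ((x ∘ τ) ∘ σ)
        = (((Finset.univ.filter fun σ : Equiv.Perm (Fin n) => x₀ ∘ σ = x₀).card : ℝ))⁻¹ *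
          ∑ σ ∈ Finset.univ.filter fun σ : Equiv.Perm (Fin n) => x₀ ∘ σ = x₀, ftil (x ∘ σ) :=
  symmetrized_extension_general n p f M x₀ hfsym hMsym ftil hsm hagree
end

section
/- Let f : ℝⁿ → ℝ ∪ {+∞} be a symmetric function (invariant under all coordinate permutations). Then its Fenchel conjugate f* is also symmetric, and the spectral functions satisfy (f ∘ λ)* = f* ∘ λ on the space of symmetric matrices Sⁿ. -/
/-!
Symmetry of `f*` is the change of variables `x ↦ x ∘ σ` in the supremum, the dot product being
invariant under simultaneous permutation of both arguments.

For `(f ∘ λ)* ≤ f* ∘ λ` the key is von Neumann's trace inequality `tr(XY) ≤ ⟨λ(X), λ(Y)⟩`: if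
`X = Uᵀ diag(x) U` and `Y = Vᵀ diag(y) V`, then `tr(XY) = ⟨x, S y⟩` with `S = Q ⊙ Q` for the
orthogonal `Q = U Vᵀ`, so `S` is doubly stochastic. By Birkhoff's theorem `S` is a convex
combination of permutation matrices, and the rearrangement inequality bounds each `⟨x, y ∘ σ⟩`
by `⟨x, y⟩` for nonincreasing `x, y`. For the reverse inequality each `x` is matched by
`X = Vᵀ diag(x) V`, diagonalised together with `Y`, so that `tr(XY) = ⟨x, y⟩`; and `F X = f x`
since the eigenvalue vector of `X` is a rearrangement of `x` and `f` is symmetric.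
-/

open Matrix

variable {n : ℕ}

/-- Dot product on `Fin n → ℝ`. -/
def dotp (v w : Fin n → ℝ) : ℝ := ∑ i, v i * w i

/-- Fenchel conjugate of an extended-real-valued function on `ℝⁿ`. -/
noncomputable def fconj (f : (Fin n → ℝ) → EReal) (y : Fin n → ℝ) : EReal :=
  ⨆ x : Fin n → ℝ, ((dotp x y : ℝ) : EReal) - f x

/-- Fenchel conjugate on the space of symmetric matrices, with the trace inner product. -/
noncomputable def mconj (F : Matrix (Fin n) (Fin n) ℝ → EReal) (Y : Matrix (Fin n) (Fin n) ℝ) : EReal :=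
  ⨆ X : {A : Matrix (Fin n) (Fin n) ℝ // A.IsSymm},
    ((Matrix.trace (X.1 * Y) : ℝ) : EReal) - F X.1

/-- `x` is the nonincreasing eigenvalue vector of `X`. -/
def eigPred (X : Matrix (Fin n) (Fin n) ℝ) (x : Fin n → ℝ) : Prop :=
  Antitone x ∧ ∃ U : Matrix (Fin n) (Fin n) ℝ, Uᵀ * U = 1 ∧ X = Uᵀ * Matrix.diagonal x * U

section
variable {ι R : Type*} [Fintype ι] [DecidableEq ι]

theorem Monovary.dotProduct_mulVec_le_of_mem_doublyStochastic
    [Field R] [LinearOrder R] [IsStrictOrderedRing R] {a b : ι → R} (hab : Monovary a b)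
    {S : Matrix ι ι R} (hS : S ∈ doublyStochastic R ι) :
    a ⬝ᵥ (S *ᵥ b) ≤ a ⬝ᵥ b := by
  obtain ⟨w, hw_nonneg, hw_sum, rfl⟩ := exists_eq_sum_perm_of_mem_doublyStochastic hS
  calc a ⬝ᵥ ((∑ σ, w σ • σ.permMatrix R) *ᵥ b) = ∑ σ, w σ * ∑ i, a i * b (σ i) := by
        simp only [sum_mulVec, smul_mulVec, permMatrix_mulVec, dotProduct_sum, dotProduct_smul,
          smul_eq_mul]
        rfl
    _ ≤ ∑ σ, w σ * ∑ i, a i * b i := Finset.sum_le_sum fun σ _ =>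
        mul_le_mul_of_nonneg_left hab.sum_mul_comp_perm_le_sum_mul (hw_nonneg σ)
    _ = a ⬝ᵥ b := by rw [← Finset.sum_mul, hw_sum, one_mul, dotProduct]

theorem hadamard_self_mem_doublyStochastic [Field R] [LinearOrder R] [IsStrictOrderedRing R]
    {Q : Matrix ι ι R} (hQ : Qᵀ * Q = 1) : Q ⊙ Q ∈ doublyStochastic R ι := by
  have hQ' : Q * Qᵀ = 1 := mul_eq_one_comm.mp hQ
  refine mem_doublyStochastic_iff_sum.mpr
    ⟨fun i j => mul_self_nonneg (Q i j), fun i => ?_, fun j => ?_⟩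
  · simpa [Matrix.mul_apply] using congr_fun₂ hQ' i i
  · simpa [Matrix.mul_apply] using congr_fun₂ hQ j j

theorem trace_diagonal_mul_mul_diagonal_mul_transpose [CommSemiring R] (Q : Matrix ι ι R)
    (x y : ι → R) :
    trace (diagonal x * Q * diagonal y * Qᵀ) = x ⬝ᵥ ((Q ⊙ Q) *ᵥ y) := by
  simp only [trace, diag_apply, mul_apply (M := diagonal x * Q * diagonal y), mul_diagonal,
    diagonal_mul, transpose_apply, dotProduct, mulVec, hadamard_apply, Finset.mul_sum]
  exact Finset.sum_congr rfl fun i _ => Finset.sum_congr rfl fun j _ => by ring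

theorem trace_conj_diagonal_mul_conj_diagonal [CommSemiring R] (U V : Matrix ι ι R)
    (x y : ι → R) :
    trace (Uᵀ * diagonal x * U * (Vᵀ * diagonal y * V)) =
      trace (diagonal x * (U * Vᵀ) * diagonal y * (U * Vᵀ)ᵀ) := by
  rw [transpose_mul, transpose_transpose]
  simp only [Matrix.mul_assoc]
  rw [trace_mul_comm]
  simp only [Matrix.mul_assoc]

theorem isSymm_transpose_mul_diagonal_mul [CommSemiring R] (U : Matrix ι ι R) (x : ι → R) :
    (Uᵀ * diagonal x * U).IsSymm := by
  simp only [IsSymm, transpose_mul, transpose_transpose, diagonal_transpose, Matrix.mul_assoc]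

theorem permMatrix_mul_diagonal_mul_transpose [Semiring R] (σ : Equiv.Perm ι) (x : ι → R) :
    σ.permMatrix R * diagonal x * (σ.permMatrix R)ᵀ = diagonal (x ∘ σ) := by
  rw [transpose_permMatrix, PEquiv.toMatrix_toPEquiv_mul, PEquiv.mul_toMatrix_toPEquiv,
    submatrix_submatrix, Function.comp_id, Function.id_comp, Equiv.Perm.inv_def,
    Equiv.symm_symm, submatrix_diagonal_equiv]

theorem transpose_permMatrix_mul_self [Semiring R] (σ : Equiv.Perm ι) :
    (σ.permMatrix R)ᵀ * σ.permMatrix R = 1 := by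
  rw [transpose_permMatrix, ← permMatrix_mul, mul_inv_cancel, permMatrix_one]

end

theorem exists_perm_antitone_comp {α : Type*} [LinearOrder α] (x : Fin n → α) :
    ∃ σ : Equiv.Perm (Fin n), Antitone (x ∘ σ) :=
  ⟨Tuple.sort (OrderDual.toDual ∘ x), fun _ _ hij => Tuple.monotone_sort (OrderDual.toDual ∘ x) hij⟩

theorem exists_perm_eigPred_conj_diagonal {U : Matrix (Fin n) (Fin n) ℝ} (hU : Uᵀ * U = 1)
    (x : Fin n → ℝ) : ∃ σ : Equiv.Perm (Fin n), eigPred (Uᵀ * diagonal x * U) (x ∘ σ) := by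
  obtain ⟨σ, hσ⟩ := exists_perm_antitone_comp x
  have hP := transpose_permMatrix_mul_self (R := ℝ) σ
  refine ⟨σ, hσ, σ.permMatrix ℝ * U, ?_, ?_⟩
  · rw [transpose_mul, Matrix.mul_assoc, ← Matrix.mul_assoc _ _ U, hP, Matrix.one_mul, hU]
  · rw [← permMatrix_mul_diagonal_mul_transpose, transpose_mul]
    simp only [Matrix.mul_assoc, ← Matrix.mul_assoc _ (σ.permMatrix ℝ) _, hP, Matrix.one_mul]

theorem exists_eigPred_of_isSymm {X : Matrix (Fin n) (Fin n) ℝ} (hX : X.IsSymm) :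
    ∃ x, eigPred X x := by
  have hH : X.IsHermitian := by rwa [IsHermitian, conjTranspose_eq_transpose_of_trivial]
  set W : Matrix (Fin n) (Fin n) ℝ := ↑hH.eigenvectorUnitary
  have hstar : star W = Wᵀ := by rw [star_eq_conjTranspose, conjTranspose_eq_transpose_of_trivial]
  have hWW : (Wᵀ)ᵀ * Wᵀ = 1 := by
    rw [transpose_transpose, ← hstar]; exact Unitary.coe_mul_star_self _
  have hXW : X = (Wᵀ)ᵀ * diagonal hH.eigenvalues * Wᵀ := by
    conv_lhs => rw [hH.spectral_theorem]
    simp [W, hstar, RCLike.ofReal_real_eq_id]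
  obtain ⟨σ, hσ⟩ := exists_perm_eigPred_conj_diagonal hWW hH.eigenvalues
  exact ⟨_, hXW.symm ▸ hσ⟩

theorem trace_mul_le_dotp_of_eigPred {X Y : Matrix (Fin n) (Fin n) ℝ} {x y : Fin n → ℝ}
    (hX : eigPred X x) (hY : eigPred Y y) : trace (X * Y) ≤ dotp x y := by
  obtain ⟨hx, U, hU, rfl⟩ := hX
  obtain ⟨hy, V, hV, rfl⟩ := hY
  have hQ : (U * Vᵀ)ᵀ * (U * Vᵀ) = 1 := by
    rw [transpose_mul, transpose_transpose, Matrix.mul_assoc, ← Matrix.mul_assoc Uᵀ, hU,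
      Matrix.one_mul, mul_eq_one_comm.mp hV]
  rw [trace_conj_diagonal_mul_conj_diagonal, trace_diagonal_mul_mul_diagonal_mul_transpose]
  exact (hx.monovary hy).dotProduct_mulVec_le_of_mem_doublyStochastic
    (hadamard_self_mem_doublyStochastic hQ)

theorem trace_conj_diagonal_mul_conj_diagonal_self {U : Matrix (Fin n) (Fin n) ℝ}
    (hU : Uᵀ * U = 1) (x y : Fin n → ℝ) :
    trace (Uᵀ * diagonal x * U * (Uᵀ * diagonal y * U)) = dotp x y := by
  rw [trace_conj_diagonal_mul_conj_diagonal, mul_eq_one_comm.mp hU, transpose_one,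
    Matrix.mul_one, Matrix.mul_one, diagonal_mul_diagonal, trace_diagonal]
  rfl

theorem dotp_comp_perm (x y : Fin n → ℝ) (σ : Equiv.Perm (Fin n)) :
    dotp (x ∘ σ) (y ∘ σ) = dotp x y :=
  Equiv.sum_comp σ fun i => x i * y i

theorem fconj_comp_perm {f : (Fin n → ℝ) → EReal}
    (hf : ∀ (σ : Equiv.Perm (Fin n)) (x : Fin n → ℝ), f (x ∘ σ) = f x)
    (σ : Equiv.Perm (Fin n)) (y : Fin n → ℝ) : fconj f (y ∘ σ) = fconj f y := by
  unfold fconj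
  refine (Equiv.iSup_congr (σ.symm.arrowCongr (Equiv.refl ℝ)) fun x => ?_).symm
  change ((dotp (x ∘ σ) (y ∘ σ) : ℝ) : EReal) - f (x ∘ σ) = _
  rw [dotp_comp_perm, hf]

section
variable {f : (Fin n → ℝ) → EReal} {F : Matrix (Fin n) (Fin n) ℝ → EReal}
  {Y : Matrix (Fin n) (Fin n) ℝ} {y : Fin n → ℝ}

theorem mconj_le_fconj_of_eigPred (hF : ∀ X x, eigPred X x → F X = f x) (hY : eigPred Y y) :
    mconj F Y ≤ fconj f y := by
  refine iSup_le fun ⟨X, hX⟩ => ?_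
  obtain ⟨x, hx⟩ := exists_eigPred_of_isSymm hX
  rw [hF X x hx]
  exact le_iSup_of_le x <|
    EReal.sub_le_sub (EReal.coe_le_coe_iff.2 (trace_mul_le_dotp_of_eigPred hx hY)) le_rfl

theorem fconj_le_mconj_of_eigPred
    (hf : ∀ (σ : Equiv.Perm (Fin n)) (x : Fin n → ℝ), f (x ∘ σ) = f x)
    (hF : ∀ X x, eigPred X x → F X = f x) (hY : eigPred Y y) :
    fconj f y ≤ mconj F Y := by
  obtain ⟨-, U, hU, rfl⟩ := hY
  refine iSup_le fun x => ?_
  obtain ⟨σ, hσ⟩ := exists_perm_eigPred_conj_diagonal hU x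
  refine le_iSup_of_le ⟨_, isSymm_transpose_mul_diagonal_mul U x⟩ (le_of_eq ?_)
  rw [hF _ _ hσ, hf, trace_conj_diagonal_mul_conj_diagonal_self hU]

end

/-- For a symmetric function `f`, the Fenchel conjugate `f*` is symmetric and the spectral
functions satisfy `(f ∘ λ)* = f* ∘ λ` on the symmetric matrices. -/
theorem spectral_conjugacy (f : (Fin n → ℝ) → EReal)
    (hf : ∀ (σ : Equiv.Perm (Fin n)) (x : Fin n → ℝ), f (x ∘ σ) = f x)
    (F : Matrix (Fin n) (Fin n) ℝ → EReal)
    (hF : ∀ (X : Matrix (Fin n) (Fin n) ℝ) (x : Fin n → ℝ), eigPred X x → F X = f x) :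
    (∀ (σ : Equiv.Perm (Fin n)) (y : Fin n → ℝ), fconj f (y ∘ σ) = fconj f y) ∧
    ∀ (Y : Matrix (Fin n) (Fin n) ℝ) (y : Fin n → ℝ), eigPred Y y →
      mconj F Y = fconj f y :=
  ⟨fconj_comp_perm hf, fun _ _ hY =>
    le_antisymm (mconj_le_fconj_of_eigPred hF hY) (fconj_le_mconj_of_eigPred hf hF hY)⟩
end

section
/- Let Q be a subset of a Euclidean space E that is prox-regular at x̄ ∈ Q with the metric projection P_Q being C¹ near x̄. Then the tangent cone mapping x ↦ T_Q(x) (for x ∈ Q near x̄) is outer-semicontinuous at x̄: for any sequences xᵢ → x̄ with xᵢ ∈ Q and wᵢ ∈ T_Q(xᵢ) with wᵢ → w̄, one has w̄ ∈ T_Q(x̄). In particular dim T_Q(x) ≤ dim T_Q(x̄) for x ∈ Q near x̄. -/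
/-!
Near `x₀` the projection `P` is a `C¹` retraction onto `Q`: it maps `U` into `Q` and fixes the
points of `Q ∩ U`. Comparing `P` with the identity along `Q` shows that `DP(x)` fixes `T_Q(x)`,
while the chain rule along straight lines puts the range of `DP(x)` inside `T_Q(x)`. Hence
`T_Q(x) = ker (DP(x) - 1)` is a linear subspace for `x ∈ Q ∩ U`, and both claims follow from the
continuity of `DP`: kernels are closed under limits of the operators, and `dim ker` is upper
semicontinuous because the rank is lower semicontinuous.
-/

open Filter Metric Topology

variable {E : Type*} [NormedAddCommGroup E] [InnerProductSpace ℝ E] [FiniteDimensional ℝ E]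

omit [InnerProductSpace ℝ E] [FiniteDimensional ℝ E] in
theorem projSet_eq_singleton {Q : Set E} {x : E} (hx : x ∈ Q) : projSet Q x = {x} := by
  ext y
  simp only [projSet, Set.mem_ofPred_eq, Set.mem_singleton_iff, infDist_zero_of_mem hx,
    dist_eq_zero]
  exact ⟨fun h => h.2.symm, fun h => ⟨h ▸ hx, h.symm⟩⟩

namespace ContinuousLinearMap

variable {𝕜 F G : Type*} [NontriviallyNormedField 𝕜] [NormedAddCommGroup F] [NormedSpace 𝕜 F]
  [NormedAddCommGroup G] [NormedSpace 𝕜 G]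

theorem mem_ker_of_tendsto {ι : Type*} {l : Filter ι} [l.NeBot] {A : ι → F →L[𝕜] G}
    {B : F →L[𝕜] G} {w : ι → F} {v : F} (hA : Tendsto A l (𝓝 B)) (hw : Tendsto w l (𝓝 v))
    (hker : ∀ᶠ i in l, w i ∈ LinearMap.ker (A i : F →ₗ[𝕜] G)) :
    v ∈ LinearMap.ker (B : F →ₗ[𝕜] G) :=
  (isClosed_eq (continuous_fst.clm_apply continuous_snd) continuous_const).mem_of_tendsto
    (hA.prodMk_nhds hw) hker

theorem eventually_finrank_ker_le [CompleteSpace 𝕜] [FiniteDimensional 𝕜 F] (A : F →L[𝕜] G) :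
    ∀ᶠ B : F →L[𝕜] G in 𝓝 A, Module.finrank 𝕜 (LinearMap.ker (B : F →ₗ[𝕜] G)) ≤
      Module.finrank 𝕜 (LinearMap.ker (A : F →ₗ[𝕜] G)) := by
  have hrank : ∀ᶠ B : F →L[𝕜] G in 𝓝 A, Module.finrank 𝕜 (LinearMap.range (A : F →ₗ[𝕜] G)) ≤
      Module.finrank 𝕜 (LinearMap.range (B : F →ₗ[𝕜] G)) := by
    filter_upwards [(isOpen_setOfPred_nat_le_rank _).mem_nhds (Module.finrank_eq_rank 𝕜 _).le]
      with B hB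
    rw [LinearMap.rank, ← Module.finrank_eq_rank] at hB
    exact_mod_cast hB
  filter_upwards [hrank] with B hB
  have := (A : F →ₗ[𝕜] G).finrank_range_add_finrank_ker
  have := (B : F →ₗ[𝕜] G).finrank_range_add_finrank_ker
  omega

end ContinuousLinearMap

section Retraction

variable {𝕜 F : Type*} [NontriviallyNormedField 𝕜] [NormedAddCommGroup F] [NormedSpace 𝕜 F]
  {Q U : Set F} {P : F → F} {x : F} {A : F →L[𝕜] F}

theorem HasFDerivAt.apply_eq_self_of_mem_tangentConeAt (hPid : Set.EqOn P id (Q ∩ U))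
    (hU : U ∈ 𝓝 x) (hx : x ∈ Q) (hA : HasFDerivAt P A x) {w : F}
    (hw : w ∈ tangentConeAt 𝕜 Q x) : A w = w := by
  have hP_eq_id : P =ᶠ[𝓝[Q] x] id :=
    eventually_nhdsWithin_iff.mpr (mem_of_superset hU fun y hy hyQ => hPid ⟨hyQ, hy⟩)
  exact hA.hasFDerivWithinAt.unique_on
    ((hasFDerivWithinAt_id x Q).congr_of_eventuallyEq hP_eq_id (hPid ⟨hx, mem_of_mem_nhds hU⟩)) hw

theorem HasFDerivAt.apply_mem_tangentConeAt (hPQ : Set.MapsTo P U Q) (hU : U ∈ 𝓝 x)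
    (hPx : P x = x) (hA : HasFDerivAt P A x) (v : F) : A v ∈ tangentConeAt 𝕜 Q x := by
  have hv : v ∈ tangentConeAt 𝕜 U x := by
    rw [tangentConeAt_of_mem_nhds hU]
    trivial
  have := hA.hasFDerivWithinAt.mapsTo_tangent_cone hv
  rw [hPx] at this
  exact tangentConeAt_mono hPQ.image_subset this

theorem tangentConeAt_eq_ker_of_retraction (hPQ : Set.MapsTo P U Q) (hPid : Set.EqOn P id (Q ∩ U))
    (hU : U ∈ 𝓝 x) (hx : x ∈ Q) (hA : HasFDerivAt P A x) :
    tangentConeAt 𝕜 Q x = LinearMap.ker ((A - 1 : F →L[𝕜] F) : F →ₗ[𝕜] F) := by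
  ext v
  simp only [ContinuousLinearMap.toLinearMap_sub, ContinuousLinearMap.toLinearMap_one,
    SetLike.mem_coe, LinearMap.mem_ker, LinearMap.sub_apply, ContinuousLinearMap.coe_coe,
    Module.End.one_apply, sub_eq_zero]
  refine ⟨hA.apply_eq_self_of_mem_tangentConeAt hPid hU hx, fun hv => hv ▸ ?_⟩
  exact hA.apply_mem_tangentConeAt hPQ hU (hPid ⟨hx, mem_of_mem_nhds hU⟩) v

end Retraction

/-- If the projection onto a prox-regular set is `C¹` near `x₀`, the tangent cone mapping is
outer-semicontinuous at `x₀`, and the dimension of the tangent cone at nearby points of `Q`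
is at most its dimension at `x₀`. -/
theorem tangentCone_outer_semicontinuous {Q : Set E} {x₀ : E}
    (hQ : ProxRegularAt Q x₀) (P : E → E) (U : Set E)
    (hU : IsOpen U) (hxU : x₀ ∈ U) (hP : ∀ x ∈ U, P x ∈ projSet Q x)
    (hsm : ContDiffOn ℝ 1 P U) :
    (∀ (xi wi : ℕ → E) (w : E), (∀ i, xi i ∈ Q) → Tendsto xi atTop (𝓝 x₀) →
        (∀ i, wi i ∈ tangentConeAt ℝ Q (xi i)) → Tendsto wi atTop (𝓝 w) →
        w ∈ tangentConeAt ℝ Q x₀) ∧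
    ∃ ε > (0:ℝ), ∀ x ∈ Q, dist x x₀ < ε →
      Module.finrank ℝ (Submodule.span ℝ (tangentConeAt ℝ Q x)) ≤
      Module.finrank ℝ (Submodule.span ℝ (tangentConeAt ℝ Q x₀)) := by
  set L : E → E →L[ℝ] E := fun x => fderiv ℝ P x - 1
  have hPQ : Set.MapsTo P U Q := fun x hx => (hP x hx).1
  have hPid : Set.EqOn P id (Q ∩ U) := fun x hx => by
    simpa [projSet_eq_singleton hx.1] using hP x hx.2
  have hcone : ∀ x ∈ Q, x ∈ U → tangentConeAt ℝ Q x = LinearMap.ker (L x : E →ₗ[ℝ] E) :=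
    fun x hxQ hx => tangentConeAt_eq_ker_of_retraction hPQ hPid (hU.mem_nhds hx) hxQ
      ((hsm.differentiableOn one_ne_zero).differentiableAt (hU.mem_nhds hx)).hasFDerivAt
  have hL : ContinuousAt L x₀ :=
    ((hsm.continuousOn_fderiv_of_isOpen hU le_rfl).continuousAt (hU.mem_nhds hxU)).sub
      continuousAt_const
  refine ⟨fun xi wi w hxiQ hxi hwi hw => ?_, ?_⟩
  · rw [hcone x₀ hQ.1 hxU]
    refine ContinuousLinearMap.mem_ker_of_tendsto (hL.tendsto.comp hxi) hw ?_
    filter_upwards [hxi (hU.mem_nhds hxU)] with i hi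
    exact (hcone _ (hxiQ i) hi).subset (hwi i)
  · obtain ⟨ε, hε, hball⟩ := Metric.eventually_nhds_iff.mp
      ((hU.eventually_mem hxU).and (hL.eventually (L x₀).eventually_finrank_ker_le))
    refine ⟨ε, hε, fun x hxQ hx => ?_⟩
    obtain ⟨hxU', hrank⟩ := hball hx
    rwa [hcone x hxQ hxU', hcone x₀ hQ.1 hxU, Submodule.span_eq, Submodule.span_eq]
end
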